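/- arXiv:1312.0531 — 10 statements merged into one kernel-verified Lean document; each statement's English description precedes it below -/
import Mathlib

section
/- Let n ≥ 2 be even and let σ* be the uniform probability distribution on U. Then for every Ŷ ∈ ℝⁿ, Σ_{u ∈ U} σ*(u) · ((2/n) Σ_{i=1}^n u_i Ŷ_i)² = (4/(n(n−1))) Σ_{i=1}^n (Ŷ_i − μ)², where μ = (1/n) Σ_{i=1}^n Ŷ_i. (This is the conditional variance of the mean-difference estimator under complete randomization.) -/
/-! The balanced sign vectors are exchangeable: `U` is invariant under permutations of the
coordinates, so the second moments `∑_{u ∈ U} u_i u_j` take one value `|U|` on the diagonal and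
one value `c` off it. Every `u ∈ U` sums to zero, hence so does every row of this matrix, which
forces `(n - 1) c = -|U|`. Expanding the square then gives
`(n - 1) ∑_{u ∈ U} (∑ u_i Y_i)² = |U| (n ∑ Y_i² - (∑ Y_i)²) = n |U| ∑ (Y_i - μ)²`. -/

open scoped Classical BigOperators

/-- The ±1 sign associated to a boolean assignment: `true ↦ 1`, `false ↦ -1`. -/
noncomputable def sgn {n : ℕ} (u : Fin n → Bool) (i : Fin n) : ℝ :=
  if u i then 1 else -1

/-- The set `U` of balanced ±1 assignment vectors: `u ∈ {−1,1}ⁿ` with `∑ i, u i = 0`. -/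
noncomputable def balancedAssignments (n : ℕ) : Finset (Fin n → Bool) :=
  Finset.univ.filter (fun u => ∑ i, sgn u i = 0)

open Finset

lemma sgn_mul_self {n : ℕ} (u : Fin n → Bool) (i : Fin n) : sgn u i * sgn u i = 1 := by
  unfold sgn; split_ifs <;> norm_num

lemma mem_balancedAssignments {n : ℕ} {u : Fin n → Bool} :
    u ∈ balancedAssignments n ↔ ∑ i, sgn u i = 0 := by
  simp [balancedAssignments]

lemma balancedAssignments_nonempty {n : ℕ} (hn : Even n) :
    (balancedAssignments n).Nonempty := by
  obtain ⟨m, rfl⟩ := hn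
  refine ⟨fun i => decide ((i : ℕ) < m), mem_balancedAssignments.2 ?_⟩
  simp [Fin.sum_univ_add, sgn]

lemma comp_perm_mem_balancedAssignments {n : ℕ} {u : Fin n → Bool}
    (hu : u ∈ balancedAssignments n) (σ : Equiv.Perm (Fin n)) :
    u ∘ σ ∈ balancedAssignments n := by
  rw [mem_balancedAssignments] at hu ⊢
  exact (Equiv.sum_comp σ (sgn u)).trans hu

lemma sum_sgn_mul_sgn_perm {n : ℕ} (σ : Equiv.Perm (Fin n)) (i j : Fin n) :
    ∑ u ∈ balancedAssignments n, sgn u (σ i) * sgn u (σ j)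
      = ∑ u ∈ balancedAssignments n, sgn u i * sgn u j :=
  sum_nbij' (· ∘ σ) (· ∘ σ.symm) (fun _ hu => comp_perm_mem_balancedAssignments hu σ)
    (fun _ hv => comp_perm_mem_balancedAssignments hv σ.symm)
    (fun _ _ => by ext; simp) (fun _ _ => by ext; simp) (fun _ _ => rfl)

lemma sum_sgn_mul_sgn_eq_of_ne {n : ℕ} {i j l : Fin n} (hj : j ≠ i) (hl : l ≠ i) :
    ∑ u ∈ balancedAssignments n, sgn u i * sgn u l
      = ∑ u ∈ balancedAssignments n, sgn u i * sgn u j := by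
  have := sum_sgn_mul_sgn_perm (Equiv.swap j l) i j
  rwa [Equiv.swap_apply_of_ne_of_ne hj.symm hl.symm, Equiv.swap_apply_left] at this

lemma sum_sgn_mul_sgn_self {n : ℕ} (i : Fin n) :
    ∑ u ∈ balancedAssignments n, sgn u i * sgn u i = #(balancedAssignments n) := by
  simp [sgn_mul_self]

lemma sum_sum_sgn_mul_sgn_eq_zero {n : ℕ} (i : Fin n) :
    ∑ l, ∑ u ∈ balancedAssignments n, sgn u i * sgn u l = 0 := by
  rw [sum_comm]
  refine sum_eq_zero fun u hu => ?_
  rw [← mul_sum, mem_balancedAssignments.1 hu, mul_zero]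

lemma sub_one_mul_sum_sgn_mul_sgn {n : ℕ} (i j : Fin n) :
    ((n : ℝ) - 1) * ∑ u ∈ balancedAssignments n, sgn u i * sgn u j
      = #(balancedAssignments n) * (n * (if i = j then 1 else 0) - 1) := by
  obtain rfl | hij := eq_or_ne i j
  · rw [sum_sgn_mul_sgn_self, if_pos rfl]; ring
  set c := ∑ u ∈ balancedAssignments n, sgn u i * sgn u j
  have hrow : ∑ l, (∑ u ∈ balancedAssignments n, sgn u i * sgn u l - c)
      = #(balancedAssignments n) - c := by
    rw [← sum_sgn_mul_sgn_self i]
    refine sum_eq_single i (fun l _ hl => sub_eq_zero.2 (sum_sgn_mul_sgn_eq_of_ne hij.symm hl))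
      (by simp)
  rw [sum_sub_distrib, sum_sum_sgn_mul_sgn_eq_zero, sum_const, card_univ, Fintype.card_fin,
    nsmul_eq_mul] at hrow
  rw [if_neg hij]
  linarith

lemma sub_one_mul_sum_sq_sum_sgn_mul {n : ℕ} (Z : Fin n → ℝ) :
    ((n : ℝ) - 1) * ∑ u ∈ balancedAssignments n, (∑ i, sgn u i * Z i) ^ 2
      = #(balancedAssignments n) * (n * ∑ i, Z i ^ 2 - (∑ i, Z i) ^ 2) := by
  have hexpand (u : Fin n → Bool) :
      (∑ i, sgn u i * Z i) ^ 2 = ∑ i, ∑ j, Z i * Z j * (sgn u i * sgn u j) := by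
    rw [sq, sum_mul_sum]
    exact sum_congr rfl fun _ _ => sum_congr rfl fun _ _ => by ring
  calc ((n : ℝ) - 1) * ∑ u ∈ balancedAssignments n, (∑ i, sgn u i * Z i) ^ 2
      = ∑ i, ∑ j, Z i * Z j *
          (((n : ℝ) - 1) * ∑ u ∈ balancedAssignments n, sgn u i * sgn u j) := by
        simp only [hexpand, mul_sum]
        rw [sum_comm]
        refine sum_congr rfl fun i _ => ?_
        rw [sum_comm]
        exact sum_congr rfl fun j _ => sum_congr rfl fun u _ => by ring
    _ = #(balancedAssignments n) * (n * ∑ i, Z i ^ 2 - (∑ i, Z i) ^ 2) := by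
        simp only [sub_one_mul_sum_sgn_mul_sgn, mul_sub, mul_ite, mul_one, mul_zero,
          sum_sub_distrib, sum_ite_eq, mem_univ, if_true, sq, sum_mul_sum]
        simp only [mul_sum]
        exact congrArg₂ _ (sum_congr rfl fun _ _ => by ring)
          (sum_congr rfl fun _ _ => sum_congr rfl fun _ _ => by ring)

lemma mul_sum_sq_sub_mean {ι : Type*} (s : Finset ι) (Y : ι → ℝ) :
    #s * ∑ i ∈ s, (Y i - (1 / #s) * ∑ j ∈ s, Y j) ^ 2
      = #s * ∑ i ∈ s, Y i ^ 2 - (∑ i ∈ s, Y i) ^ 2 := by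
  obtain hs | hs := eq_or_ne (#s : ℝ) 0
  · simp [card_eq_zero.1 (by exact_mod_cast hs)]
  simp only [sub_sq, sum_add_distrib, sum_sub_distrib, ← sum_mul, ← mul_sum, sum_const,
    nsmul_eq_mul]
  field_simp
  ring

/-- Under complete randomization (the uniform distribution on `U`), the conditional
variance of the mean-difference estimator equals `4/(n(n−1)) ∑ (Ŷᵢ − μ)²`. -/
theorem stmt0 (n : ℕ) (hn : 2 ≤ n) (hne : Even n) (Y : Fin n → ℝ) :
    ∑ u ∈ balancedAssignments n,
        ((balancedAssignments n).card : ℝ)⁻¹ *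
          ((2 / (n : ℝ)) * ∑ i, sgn u i * Y i) ^ 2
      = (4 / ((n : ℝ) * ((n : ℝ) - 1))) *
          ∑ i, (Y i - (1 / (n : ℝ)) * ∑ j, Y j) ^ 2 := by
  have hU : (#(balancedAssignments n) : ℝ) ≠ 0 := by
    exact_mod_cast (balancedAssignments_nonempty hne).card_ne_zero
  have h2 : (2 : ℝ) ≤ n := by exact_mod_cast hn
  have hn₀ : (n : ℝ) ≠ 0 := by linarith
  have hn₁ : (n : ℝ) - 1 ≠ 0 := by linarith
  have hquad := sub_one_mul_sum_sq_sum_sgn_mul Y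
  have hmean := mul_sum_sq_sub_mean univ Y
  simp only [card_univ, Fintype.card_fin] at hmean
  rw [← hmean] at hquad
  simp only [mul_pow, ← mul_sum]
  generalize ∑ u ∈ balancedAssignments n, (∑ i, sgn u i * Y i) ^ 2 = T at hquad ⊢
  generalize ∑ i, (Y i - 1 / (n : ℝ) * ∑ j, Y j) ^ 2 = V at hquad ⊢
  field_simp
  linear_combination 4 * hquad
end

section
/- Let n ≥ 2 be even and let N be a seminorm on ℝⁿ that is invariant under permutations of coordinates, i.e. N(y ∘ π) = N(y) for every permutation π of {1,…,n}. For a probability distribution σ on U define V(σ) = ⨆_{y ∈ ℝⁿ, N(y) ≤ 1} Σ_{u ∈ U} σ(u) (Σ_{i=1}^n u_i y_i)², a value in [0,∞]. Then the uniform distribution σ* on U satisfies V(σ*) ≤ V(σ) for every probability distribution σ on U. (No free lunch: complete randomization minimizes the worst-case variance over outcome vectors of bounded permutation-invariant seminorm.) -/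
/-!
The balanced assignments form a single orbit under permutation of coordinates. Hence, for any
weights `σ` of total mass one, averaging the `σ`-variance at the permuted outcome vectors
`y ∘ π` over all permutations `π` gives exactly the variance of the uniform design at `y`. Some
`π` is at least as bad as the average, and `N (y ∘ π) = N y`, so every value of the uniform design
is dominated by a value of `σ`.
-/

open scoped Classical BigOperators

/-- The worst-case variance `V(σ) = ⨆_{N(y) ≤ 1} ∑_{u ∈ U} σ(u) (∑ uᵢ yᵢ)²` of a design
`σ` on `U`, over outcome vectors of permutation-invariant seminorm at most one, as a
value in `[0, ∞]`. -/
noncomputable def worstCaseVar (n : ℕ) (N : Seminorm ℝ (Fin n → ℝ))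
    (σ : (Fin n → Bool) → ℝ) : ENNReal :=
  ⨆ (y : Fin n → ℝ) (_ : N y ≤ 1),
    ENNReal.ofReal (∑ u ∈ balancedAssignments n, σ u * (∑ i, sgn u i * y i) ^ 2)

open Finset

section Balanced

variable {n : ℕ}

lemma sum_sgn_eq_card_sub_card (u : Fin n → Bool) :
    ∑ i, sgn u i = (#{i | u i = true} : ℝ) - #{i | u i = false} := by
  simp [sgn, Finset.sum_ite, sub_eq_add_neg]

lemma two_mul_card_fiber_of_mem_balancedAssignments {u : Fin n → Bool}
    (hu : u ∈ balancedAssignments n) (c : Bool) : 2 * Fintype.card {i // u i = c} = n := by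
  have hsum : #{i | u i = true} + #{i | u i = false} = n := by
    simpa using card_filter_add_card_filter_not (s := univ) (fun i => u i = true)
  have hbal : #{i | u i = true} = #{i | u i = false} := by
    simp only [balancedAssignments, mem_filter, mem_univ, true_and, sum_sgn_eq_card_sub_card,
      sub_eq_zero] at hu
    exact_mod_cast hu
  rw [Fintype.card_subtype]
  cases c <;> omega

lemma exists_perm_comp_eq_of_mem_balancedAssignments {u v : Fin n → Bool}
    (hu : u ∈ balancedAssignments n) (hv : v ∈ balancedAssignments n) :
    ∃ π : Equiv.Perm (Fin n), v ∘ π = u :=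
  ⟨Equiv.ofFiberEquiv fun c => Fintype.equivOfCardEq <| by
      have := two_mul_card_fiber_of_mem_balancedAssignments hu c
      have := two_mul_card_fiber_of_mem_balancedAssignments hv c
      omega,
    funext (Equiv.ofFiberEquiv_map _)⟩

lemma comp_perm_mem_balancedAssignments_iff (u : Fin n → Bool) (π : Equiv.Perm (Fin n)) :
    u ∘ π ∈ balancedAssignments n ↔ u ∈ balancedAssignments n := by
  simp only [balancedAssignments, mem_filter, mem_univ, true_and]
  exact iff_of_eq (congrArg (· = (0 : ℝ)) (Equiv.sum_comp π (sgn u)))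

end Balanced

section Orbit

variable {n : ℕ} {M : Type*} [AddCommMonoid M]

lemma sum_perm_comp_eq_of_mem_balancedAssignments {u v : Fin n → Bool}
    (hu : u ∈ balancedAssignments n) (hv : v ∈ balancedAssignments n)
    (g : (Fin n → Bool) → M) :
    ∑ π : Equiv.Perm (Fin n), g (u ∘ π) = ∑ π : Equiv.Perm (Fin n), g (v ∘ π) := by
  obtain ⟨τ, rfl⟩ := exists_perm_comp_eq_of_mem_balancedAssignments hu hv
  exact Fintype.sum_equiv (Equiv.mulLeft τ) _ _ fun π => rfl

lemma sum_balancedAssignments_comp_perm (π : Equiv.Perm (Fin n)) (g : (Fin n → Bool) → M) :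
    ∑ v ∈ balancedAssignments n, g (v ∘ π) = ∑ v ∈ balancedAssignments n, g v :=
  sum_nbij' (· ∘ π) (· ∘ π.symm)
    (fun v hv => (comp_perm_mem_balancedAssignments_iff v π).2 hv)
    (fun v hv => (comp_perm_mem_balancedAssignments_iff v π.symm).2 hv)
    (fun v _ => by ext; simp) (fun v _ => by ext; simp) (fun _ _ => rfl)

lemma card_smul_sum_perm_comp {u : Fin n → Bool} (hu : u ∈ balancedAssignments n)
    (g : (Fin n → Bool) → M) :
    #(balancedAssignments n) • ∑ π : Equiv.Perm (Fin n), g (u ∘ π)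
      = Fintype.card (Equiv.Perm (Fin n)) • ∑ v ∈ balancedAssignments n, g v := calc
  _ = ∑ v ∈ balancedAssignments n, ∑ π : Equiv.Perm (Fin n), g (v ∘ π) := by
    rw [sum_congr rfl fun v hv => sum_perm_comp_eq_of_mem_balancedAssignments hv hu g,
      sum_const]
  _ = ∑ π : Equiv.Perm (Fin n), ∑ v ∈ balancedAssignments n, g v := by
    rw [sum_comm]
    exact sum_congr rfl fun π _ => sum_balancedAssignments_comp_perm π g
  _ = _ := by rw [sum_const, card_univ]

end Orbit

section Variance

variable {n : ℕ}

noncomputable def designVariance (n : ℕ) (σ : (Fin n → Bool) → ℝ) (y : Fin n → ℝ) : ℝ :=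
  ∑ u ∈ balancedAssignments n, σ u * (∑ i, sgn u i * y i) ^ 2

lemma sum_sgn_mul_comp_perm (u : Fin n → Bool) (y : Fin n → ℝ) (π : Equiv.Perm (Fin n)) :
    ∑ i, sgn u i * (y ∘ π) i = ∑ i, sgn (u ∘ π.symm) i * y i := by
  rw [← Equiv.sum_comp π.symm]
  simp [sgn]

lemma sum_perm_designVariance {σ : (Fin n → Bool) → ℝ}
    (hσ : ∑ u ∈ balancedAssignments n, σ u = 1) (y : Fin n → ℝ) :
    ∑ π : Equiv.Perm (Fin n), designVariance n σ (y ∘ π)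
      = Fintype.card (Equiv.Perm (Fin n))
        * designVariance n (fun _ => (#(balancedAssignments n) : ℝ)⁻¹) y := by
  set U := balancedAssignments n
  set g : (Fin n → Bool) → ℝ := fun v => (∑ i, sgn v i * y i) ^ 2
  have horbit : ∀ u ∈ U, ∑ π : Equiv.Perm (Fin n), g (u ∘ π)
      = Fintype.card (Equiv.Perm (Fin n)) / #U * ∑ v ∈ U, g v := by
    intro u hu
    have hU : (#U : ℝ) ≠ 0 := Nat.cast_ne_zero.2 (card_ne_zero_of_mem hu)
    have := card_smul_sum_perm_comp hu g
    rw [nsmul_eq_mul, nsmul_eq_mul] at this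
    rw [div_mul_eq_mul_div, eq_div_iff hU, ← this, mul_comm]
  calc ∑ π : Equiv.Perm (Fin n), designVariance n σ (y ∘ π)
      = ∑ π : Equiv.Perm (Fin n), ∑ u ∈ U, σ u * g (u ∘ π.symm) := by
        simp only [designVariance, sum_sgn_mul_comp_perm, g, U]
    _ = ∑ u ∈ U, σ u * ∑ π : Equiv.Perm (Fin n), g (u ∘ π) := by
        rw [sum_comm]
        refine sum_congr rfl fun u _ => ?_
        rw [mul_sum]
        exact Fintype.sum_equiv (Equiv.inv _) _ _ fun π => rfl
    _ = ∑ u ∈ U, σ u * (Fintype.card (Equiv.Perm (Fin n)) / #U * ∑ v ∈ U, g v) :=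
        sum_congr rfl fun u hu => by rw [horbit u hu]
    _ = _ := by
        rw [← sum_mul, hσ, one_mul, designVariance, ← mul_sum, div_eq_mul_inv, mul_assoc]

lemma exists_perm_designVariance_uniform_le {σ : (Fin n → Bool) → ℝ}
    (hσ : ∑ u ∈ balancedAssignments n, σ u = 1) (y : Fin n → ℝ) :
    ∃ π : Equiv.Perm (Fin n),
      designVariance n (fun _ => (#(balancedAssignments n) : ℝ)⁻¹) y
        ≤ designVariance n σ (y ∘ π) := by
  obtain ⟨π, -, hπ⟩ := exists_le_of_sum_le univ_nonempty
    (f := fun _ => designVariance n (fun _ => (#(balancedAssignments n) : ℝ)⁻¹) y)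
    (g := fun π : Equiv.Perm (Fin n) => designVariance n σ (y ∘ π))
    (by rw [sum_const, card_univ, nsmul_eq_mul, sum_perm_designVariance hσ])
  exact ⟨π, hπ⟩

end Variance

theorem stmt1_general (n : ℕ)
    (N : Seminorm ℝ (Fin n → ℝ))
    (hNperm : ∀ (π : Equiv.Perm (Fin n)) (y : Fin n → ℝ), N (fun i => y (π i)) = N y)
    (σ : (Fin n → Bool) → ℝ)
    (hσ1 : ∑ u ∈ balancedAssignments n, σ u = 1) :
    worstCaseVar n N (fun _ => ((balancedAssignments n).card : ℝ)⁻¹)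
      ≤ worstCaseVar n N σ := by
  refine iSup₂_le fun y hy => ?_
  obtain ⟨π, hπ⟩ := exists_perm_designVariance_uniform_le hσ1 y
  exact le_iSup₂_of_le (y ∘ π) ((hNperm π y).trans_le hy) (ENNReal.ofReal_le_ofReal hπ)

/-- No free lunch: complete randomization (the uniform distribution on `U`) minimizes
the worst-case variance over outcome vectors of bounded permutation-invariant
seminorm, among all probability distributions on `U`. -/
theorem stmt1 (n : ℕ) (hn : 2 ≤ n) (hne : Even n)
    (N : Seminorm ℝ (Fin n → ℝ))
    (hNperm : ∀ (π : Equiv.Perm (Fin n)) (y : Fin n → ℝ), N (fun i => y (π i)) = N y)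
    (σ : (Fin n → Bool) → ℝ)
    (hσ0 : ∀ u ∈ balancedAssignments n, 0 ≤ σ u)
    (hσ1 : ∑ u ∈ balancedAssignments n, σ u = 1) :
    worstCaseVar n N (fun _ => ((balancedAssignments n).card : ℝ)⁻¹)
      ≤ worstCaseVar n N σ :=
  stmt1_general n N hNperm σ hσ1
end

section
/- Let m ≥ 2, p ≥ 1, n = mp, and let σ be a treatment-symmetric design on even assignments. Define P ∈ ℝ^{n×n} by P_{ij} = σ({W : W_i = W_j}) − σ({W : W_i ≠ W_j})/(m−1). Then for every v ∈ ℝⁿ and every pair of treatments k ≠ k', Σ_W σ(W) · B_{kk'}(W, v)² = (2/(pn)) Σ_{i,j=1}^n P_{ij} v_i v_j; in particular the left-hand side does not depend on the choice of the pair k ≠ k'. -/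
/-!
Fix subjects `i, j` and let `Q(a, b) = σ(Wᵢ = a, Wⱼ = b)`. Treatment symmetry makes `Q` invariant
under the diagonal action of `Sym(m)` on pairs of treatments, which is transitive both on the
diagonal and off it, so `Q` takes one value `D` on the diagonal and one value `O` off it.
Expanding the square, `∑_W σ(W) B_{kk'}(W, v)²` is `p⁻²` times the quadratic form with
coefficients `Q(k,k) + Q(k',k') - Q(k,k') - Q(k',k) = 2 (D - O)`, while `σ(Wᵢ = Wⱼ) = m D` and
`σ(Wᵢ ≠ Wⱼ) = m (m - 1) O`, so `P_{ij} = m (D - O)`.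
-/

open Finset

theorem Equiv.Perm.exists_apply_eq_and_apply_eq {α : Type*} [DecidableEq α] {a b c d : α}
    (hab : a ≠ b) (hcd : c ≠ d) : ∃ π : Equiv.Perm α, π a = c ∧ π b = d := by
  refine ⟨(Equiv.swap a c).trans (Equiv.swap (Equiv.swap a c b) d), ?_, ?_⟩
  · have hb : Equiv.swap a c b ≠ c := by
      rw [Ne, Equiv.swap_apply_eq_iff, Equiv.swap_apply_right]; exact hab.symm
    simp [Equiv.swap_apply_of_ne_of_ne hb.symm hcd]
  · simp

namespace Design

variable {ι α R : Type*} [Fintype ι] [DecidableEq ι] [Fintype α] [DecidableEq α]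

def IsTreatmentSymmetric (σ : (ι → α) → R) : Prop :=
  ∀ (π : Equiv.Perm α) (W : ι → α), σ (π ∘ W) = σ W

def pairMass [AddCommMonoid R] (σ : (ι → α) → R) (i j : ι) (x : α × α) : R :=
  ∑ W with (W i, W j) = x, σ W

section AddCommMonoid

variable [AddCommMonoid R] {σ : (ι → α) → R}

theorem pairMass_perm (hσ : IsTreatmentSymmetric σ) (π : Equiv.Perm α) (i j : ι) (a b : α) :
    pairMass σ i j (π a, π b) = pairMass σ i j (a, b) := by
  refine (sum_equiv (Equiv.piCongrRight fun _ => π) (fun W => ?_) fun W _ => ?_).symm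
  · simp [π.injective.eq_iff]
  · exact (hσ π W).symm

theorem pairMass_diag (hσ : IsTreatmentSymmetric σ) (i j : ι) (a c : α) :
    pairMass σ i j (a, a) = pairMass σ i j (c, c) := by
  simpa using (pairMass_perm hσ (Equiv.swap a c) i j a a).symm

theorem pairMass_offDiag (hσ : IsTreatmentSymmetric σ) (i j : ι) {a b c d : α}
    (hab : a ≠ b) (hcd : c ≠ d) : pairMass σ i j (a, b) = pairMass σ i j (c, d) := by
  obtain ⟨π, rfl, rfl⟩ := Equiv.Perm.exists_apply_eq_and_apply_eq hab hcd
  exact (pairMass_perm hσ π i j a b).symm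

end AddCommMonoid

section CommSemiring

variable [CommSemiring R] (σ : (ι → α) → R)

theorem sum_mul_apply_eq_sum_pairMass (i j : ι) (f : α × α → R) :
    ∑ W, σ W * f (W i, W j) = ∑ x, pairMass σ i j x * f x := by
  rw [← sum_fiberwise univ (fun W => (W i, W j))]
  refine sum_congr rfl fun x _ => ?_
  rw [pairMass, sum_mul]
  exact sum_congr rfl fun W hW => by rw [(mem_filter.1 hW).2]

theorem sum_filter_eq_sum_filter_pairMass (i j : ι) (p : α × α → Prop) [DecidablePred p] :
    ∑ W with p (W i, W j), σ W = ∑ x with p x, pairMass σ i j x := by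
  simpa only [mul_boole, ← sum_filter] using
    sum_mul_apply_eq_sum_pairMass σ i j fun x => if p x then 1 else 0

end CommSemiring

section CommRing

variable [CommRing R] {σ : (ι → α) → R}

theorem sum_filter_apply_eq_apply (hσ : IsTreatmentSymmetric σ) (i j : ι) (a : α) :
    ∑ W with W i = W j, σ W = Fintype.card α * pairMass σ i j (a, a) := by
  refine (sum_filter_eq_sum_filter_pairMass σ i j fun x => x.1 = x.2).trans ?_
  have hdiag : (univ.filter fun x : α × α => x.1 = x.2) = univ.diag := by ext; simp
  rw [sum_eq_card_nsmul (b := pairMass σ i j (a, a)), hdiag, diag_card, card_univ, nsmul_eq_mul]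
  rintro ⟨b, c⟩ hbc
  obtain rfl : b = c := (mem_filter.1 hbc).2
  exact pairMass_diag hσ i j b a

theorem sum_filter_apply_ne_apply (hσ : IsTreatmentSymmetric σ) (i j : ι) {a b : α}
    (hab : a ≠ b) :
    ∑ W with W i ≠ W j, σ W = Fintype.card α * (Fintype.card α - 1) * pairMass σ i j (a, b) := by
  refine (sum_filter_eq_sum_filter_pairMass σ i j fun x => x.1 ≠ x.2).trans ?_
  have hoffDiag : (univ.filter fun x : α × α => x.1 ≠ x.2) = univ.offDiag := by ext; simp
  rw [sum_eq_card_nsmul (b := pairMass σ i j (a, b)), hoffDiag, offDiag_card, card_univ,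
    nsmul_eq_mul, Nat.cast_sub (Nat.le_mul_self _)]
  · push_cast; ring
  rintro ⟨c, d⟩ hcd
  exact pairMass_offDiag hσ i j (mem_filter.1 hcd).2 hab

def contrast (k k' a : α) : R := (if a = k then 1 else 0) - (if a = k' then 1 else 0)

theorem sum_mul_contrast_mul_contrast (hσ : IsTreatmentSymmetric σ) (i j : ι) {k k' : α}
    (hkk' : k ≠ k') :
    ∑ W, σ W * (contrast k k' (W i) * contrast k k' (W j)) =
      2 * (pairMass σ i j (k, k) - pairMass σ i j (k, k')) := by
  refine (sum_mul_apply_eq_sum_pairMass σ i j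
    fun x => contrast k k' x.1 * contrast k k' x.2).trans ?_
  simp only [contrast, mul_sub, mul_ite, mul_one, mul_zero, sum_sub_distrib,
    Fintype.sum_prod_type, sum_ite_eq', mem_univ, ↓reduceIte,
    pairMass_offDiag hσ i j hkk'.symm hkk', pairMass_diag hσ i j k' k]
  ring

end CommRing

theorem sum_mul_contrast_mul_contrast_eq [Field R] [CharZero R] {σ : (ι → α) → R}
    (hσ : IsTreatmentSymmetric σ) (i j : ι) {k k' : α} (hkk' : k ≠ k') :
    ∑ W, σ W * (contrast k k' (W i) * contrast k k' (W j)) =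
      2 / Fintype.card α * ((∑ W with W i = W j, σ W) -
        (∑ W with W i ≠ W j, σ W) / ((Fintype.card α : R) - 1)) := by
  have hcard : 1 < Fintype.card α := Fintype.one_lt_card_iff.2 ⟨k, k', hkk'⟩
  have hcard₀ : (Fintype.card α : R) ≠ 0 := by exact_mod_cast (zero_lt_one.trans hcard).ne'
  have hcard₁ : (Fintype.card α : R) - 1 ≠ 0 := sub_ne_zero.2 (by exact_mod_cast hcard.ne')
  rw [sum_mul_contrast_mul_contrast hσ i j hkk', sum_filter_apply_eq_apply hσ i j k,
    sum_filter_apply_ne_apply hσ i j hkk']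
  field_simp

end Design

theorem Finset.sum_mul_sq_sum_mul {β ι R : Type*} [CommSemiring R] (s : Finset β) (t : Finset ι)
    (σ : β → R) (a : β → ι → R) (v : ι → R) :
    ∑ W ∈ s, σ W * (∑ i ∈ t, a W i * v i) ^ 2 =
      ∑ i ∈ t, ∑ j ∈ t, (∑ W ∈ s, σ W * (a W i * a W j)) * v i * v j := by
  simp_rw [sq, sum_mul_sum, mul_sum, sum_mul]
  rw [sum_comm]
  refine sum_congr rfl fun i _ => ?_
  rw [sum_comm]
  exact sum_congr rfl fun j _ => sum_congr rfl fun W _ => by ring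

open Design

theorem stmt3_general (m p n : ℕ) (hn : n = m * p)
    (σ : (Fin n → Fin m) → ℝ)
    (hsym : ∀ (π : Equiv.Perm (Fin m)) (W : Fin n → Fin m), σ (fun i => π (W i)) = σ W)
    (P : Fin n → Fin n → ℝ)
    (hPdef : ∀ i j, P i j =
        (∑ W ∈ Finset.univ.filter (fun W : Fin n → Fin m => W i = W j), σ W)
        - (∑ W ∈ Finset.univ.filter (fun W : Fin n → Fin m => W i ≠ W j), σ W)
            / ((m : ℝ) - 1))
    (v : Fin n → ℝ) (k k' : Fin m) (hkk' : k ≠ k') :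
    ∑ W : Fin n → Fin m, σ W *
        ((1 / (p : ℝ)) * ∑ i, (((if W i = k then (1 : ℝ) else 0)
            - (if W i = k' then 1 else 0)) * v i)) ^ 2
      = (2 / ((p : ℝ) * (n : ℝ))) * ∑ i, ∑ j, P i j * v i * v j := by
  have hpair (i j : Fin n) :
      ∑ W, σ W * (contrast k k' (W i) * contrast k k' (W j)) = 2 / m * P i j := by
    simpa [hPdef, Fintype.card_fin] using sum_mul_contrast_mul_contrast_eq hsym i j hkk'
  calc _ = (1 / (p : ℝ)) ^ 2 * ∑ W, σ W * (∑ i, contrast k k' (W i) * v i) ^ 2 := by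
        rw [mul_sum]
        exact sum_congr rfl fun W _ => by simp only [contrast]; ring
    _ = (1 / (p : ℝ)) ^ 2 * ∑ i, ∑ j, 2 / m * (P i j * v i * v j) := by
        simp_rw [sum_mul_sq_sum_mul, hpair, mul_assoc]
    _ = _ := by
        simp_rw [← mul_sum, ← mul_assoc, hn]
        push_cast
        ring

/-- The sufficient statistics of a treatment-symmetric design: for every `v ∈ ℝⁿ` and every
pair of distinct treatments `k ≠ k'`, the mixed imbalance `∑_W σ(W) B_{kk'}(W,v)²` equals
`(2/(pn)) ∑_{i,j} P_{ij} vᵢ vⱼ` with `P_{ij} = σ(Wᵢ = Wⱼ) − σ(Wᵢ ≠ Wⱼ)/(m−1)`;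
in particular it does not depend on the pair `k ≠ k'`. -/
theorem stmt3 (m p n : ℕ) (hm : 2 ≤ m) (hp : 1 ≤ p) (hn : n = m * p)
    (σ : (Fin n → Fin m) → ℝ)
    (hσ0 : ∀ W, 0 ≤ σ W)
    (hσ1 : ∑ W : Fin n → Fin m, σ W = 1)
    (hsupp : ∀ W : Fin n → Fin m, σ W ≠ 0 →
        ∀ k, (Finset.univ.filter fun i => W i = k).card = p)
    (hsym : ∀ (π : Equiv.Perm (Fin m)) (W : Fin n → Fin m), σ (fun i => π (W i)) = σ W)
    (P : Fin n → Fin n → ℝ)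
    (hPdef : ∀ i j, P i j =
        (∑ W ∈ Finset.univ.filter (fun W : Fin n → Fin m => W i = W j), σ W)
        - (∑ W ∈ Finset.univ.filter (fun W : Fin n → Fin m => W i ≠ W j), σ W)
            / ((m : ℝ) - 1))
    (v : Fin n → ℝ) (k k' : Fin m) (hkk' : k ≠ k') :
    ∑ W : Fin n → Fin m, σ W *
        ((1 / (p : ℝ)) * ∑ i, (((if W i = k then (1 : ℝ) else 0)
            - (if W i = k' then 1 else 0)) * v i)) ^ 2
      = (2 / ((p : ℝ) * (n : ℝ))) * ∑ i, ∑ j, P i j * v i * v j :=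
  stmt3_general m p n hn σ hsym P hPdef v k k' hkk'
end

section
/- Let m ≥ 2, p ≥ 1, n = mp, and let σ be a treatment-symmetric design on even assignments. Then the matrix P ∈ ℝ^{n×n} defined by P_{ij} = σ({W : W_i = W_j}) − σ({W : W_i ≠ W_j})/(m−1) is positive semidefinite. -/
/-!
For a fixed assignment `W` the matrix with entries `1` if `W i = W j` and `-1/(m-1)` otherwise
is `m/(m-1)` times the Gram matrix of the vectors `e_{W i} - 𝟙/m`, the vertices of a regular
simplex centred at the origin, so it is positive semidefinite. The matrix `P` is the
`σ`-weighted sum of these matrices, and a nonnegative combination of positive semidefinite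
matrices is positive semidefinite.
-/

open Matrix Finset

section

variable {ι κ : Type*} [Fintype κ] [DecidableEq κ]

noncomputable def centredClassIndicator (W : ι → κ) : Matrix ι κ ℝ :=
  of fun i k => (if W i = k then 1 else 0) - (Fintype.card κ : ℝ)⁻¹

lemma centredClassIndicator_mul_conjTranspose [Nonempty κ] (W : ι → κ) :
    centredClassIndicator W * (centredClassIndicator W)ᴴ =
      of fun i j => (if W i = W j then 1 else 0) - (Fintype.card κ : ℝ)⁻¹ := by
  ext i j
  simp [centredClassIndicator, mul_apply, sub_mul, mul_sub, sum_sub_distrib]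

noncomputable def classContrast (W : ι → κ) : Matrix ι ι ℝ :=
  of fun i j => if W i = W j then 1 else -((Fintype.card κ : ℝ) - 1)⁻¹

lemma classContrast_eq_smul (W : ι → κ) (hκ : 1 < Fintype.card κ) :
    classContrast W = ((Fintype.card κ : ℝ) / (Fintype.card κ - 1)) •
      (centredClassIndicator W * (centredClassIndicator W)ᴴ) := by
  have : Nonempty κ := Fintype.card_pos_iff.mp (by omega)
  have hκ' : (Fintype.card κ : ℝ) - 1 ≠ 0 := by
    rw [sub_ne_zero]
    exact_mod_cast hκ.ne'
  rw [centredClassIndicator_mul_conjTranspose]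
  ext i j
  simp only [classContrast, of_apply, Matrix.smul_apply, smul_eq_mul]
  split_ifs
  · field_simp
  · field_simp
    ring

lemma posSemidef_classContrast [Fintype ι] (W : ι → κ) (hκ : 1 < Fintype.card κ) :
    (classContrast W).PosSemidef := by
  have hκ' : (1 : ℝ) < Fintype.card κ := by exact_mod_cast hκ
  rw [classContrast_eq_smul W hκ]
  exact (posSemidef_self_mul_conjTranspose _).smul (by positivity)

end

theorem stmt4_general (m n : ℕ) (hm : 2 ≤ m)
    (σ : (Fin n → Fin m) → ℝ)
    (hσ0 : ∀ W, 0 ≤ σ W)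
    (P : Matrix (Fin n) (Fin n) ℝ)
    (hPdef : ∀ i j, P i j =
        (∑ W ∈ Finset.univ.filter (fun W : Fin n → Fin m => W i = W j), σ W)
        - (∑ W ∈ Finset.univ.filter (fun W : Fin n → Fin m => W i ≠ W j), σ W)
            / ((m : ℝ) - 1)) :
    P.PosSemidef := by
  have hP : P = ∑ W, σ W • classContrast W := by
    ext i j
    simp only [hPdef, Matrix.sum_apply, Matrix.smul_apply, classContrast, of_apply,
      Fintype.card_fin, smul_eq_mul, mul_ite, sum_ite, mul_one, mul_neg, sum_neg_distrib,
      ← sum_mul, ne_eq]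
    ring
  rw [hP]
  exact posSemidef_sum _ fun W _ =>
    (posSemidef_classContrast W (by rw [Fintype.card_fin]; omega)).smul (hσ0 W)

/-- For any treatment-symmetric design `σ` on even assignments, the matrix
`P_{ij} = σ(Wᵢ = Wⱼ) − σ(Wᵢ ≠ Wⱼ)/(m−1)` is positive semidefinite. -/
theorem stmt4 (m p n : ℕ) (hm : 2 ≤ m) (hp : 1 ≤ p) (hn : n = m * p)
    (σ : (Fin n → Fin m) → ℝ)
    (hσ0 : ∀ W, 0 ≤ σ W)
    (hσ1 : ∑ W : Fin n → Fin m, σ W = 1)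
    (hsupp : ∀ W : Fin n → Fin m, σ W ≠ 0 →
        ∀ k, (Finset.univ.filter fun i => W i = k).card = p)
    (hsym : ∀ (π : Equiv.Perm (Fin m)) (W : Fin n → Fin m), σ (fun i => π (W i)) = σ W)
    (P : Matrix (Fin n) (Fin n) ℝ)
    (hPdef : ∀ i j, P i j =
        (∑ W ∈ Finset.univ.filter (fun W : Fin n → Fin m => W i = W j), σ W)
        - (∑ W ∈ Finset.univ.filter (fun W : Fin n → Fin m => W i ≠ W j), σ W)
            / ((m : ℝ) - 1)) :
    P.PosSemidef :=
  stmt4_general m n hm σ hσ0 P hPdef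
end

section
/- Let 𝒳 be a set, n even, X_1,…,X_n ∈ 𝒳, and u ∈ U. Let q be the maximum cardinality of a collection of pairwise disjoint pairs {i, j} ⊆ {1,…,n} such that u_i = 1, u_j = −1 and X_i = X_j (a maximal perfect exact match across the two groups). Then the supremum over all functions f : 𝒳 → ℝ satisfying |f(x)| ≤ 1 for all x ∈ 𝒳 of (2/n) Σ_{i=1}^n u_i f(X_i) equals 2 − 4q/n. (Hence minimizing the worst-case imbalance over the sup-norm unit ball is equivalent to maximizing the number of exact matches, i.e., incomplete blocking.) -/
open scoped Classical BigOperators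

section

open Finset

variable {𝒳 : Type*} {n : ℕ} {u : Fin n → Bool}

theorem sgn_eq_one_iff {i : Fin n} : sgn u i = 1 ↔ u i = true := by
  cases h : u i <;> norm_num [sgn, h]

theorem sgn_eq_neg_one_iff {i : Fin n} : sgn u i = -1 ↔ u i = false := by
  cases h : u i <;> norm_num [sgn, h]

theorem abs_sgn (i : Fin n) : |sgn u i| = 1 := by
  cases h : u i <;> norm_num [sgn, h]

variable (u) (X : Fin n → 𝒳)

noncomputable def imbalance (f : 𝒳 → ℝ) : ℝ :=
  ∑ i, sgn u i * f (X i)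

/-- The pairs `{i, g i}`, `i ∈ A`, form a collection of disjoint exact matches, each `+1`-subject
`i` being listed in `A` and matched to the `-1`-subject `g i`. -/
def IsExactMatching (A : Finset (Fin n)) (g : Fin n → Fin n) : Prop :=
  Set.InjOn g A ∧ ∀ i ∈ A, sgn u i = 1 ∧ sgn u (g i) = -1 ∧ X i = X (g i)

namespace IsExactMatching

variable {u X} {A : Finset (Fin n)} {g : Fin n → Fin n}

theorem disjoint_image (h : IsExactMatching u X A g) : Disjoint A (A.image g) := by
  refine Finset.disjoint_left.mpr fun i hiA hi => ?_
  obtain ⟨j, hjA, rfl⟩ := Finset.mem_image.mp hi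
  have hpos := (h.2 _ hiA).1
  rw [(h.2 j hjA).2.1] at hpos
  norm_num at hpos

theorem card_union_image (h : IsExactMatching u X A g) : #(A ∪ A.image g) = 2 * #A := by
  rw [Finset.card_union_of_disjoint h.disjoint_image, Finset.card_image_of_injOn h.1, two_mul]

theorem cast_card_compl (h : IsExactMatching u X A g) :
    (#(A ∪ A.image g)ᶜ : ℝ) = n - 2 * #A := by
  have hle : 2 * #A ≤ n := by
    simpa [h.card_union_image] using Finset.card_le_univ (A ∪ A.image g)
  rw [Finset.card_compl, h.card_union_image, Fintype.card_fin, Nat.cast_sub hle]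
  push_cast
  ring

theorem sum_union_image_eq_zero (h : IsExactMatching u X A g) (f : 𝒳 → ℝ) :
    ∑ i ∈ A ∪ A.image g, sgn u i * f (X i) = 0 := by
  rw [Finset.sum_union h.disjoint_image, Finset.sum_image fun i hi j hj => h.1 hi hj,
    ← Finset.sum_add_distrib]
  refine Finset.sum_eq_zero fun i hi => ?_
  obtain ⟨hpos, hneg, hX⟩ := h.2 i hi
  rw [hpos, hneg, hX]
  ring

theorem imbalance_eq (h : IsExactMatching u X A g) (f : 𝒳 → ℝ) :
    imbalance u X f = ∑ i ∈ (A ∪ A.image g)ᶜ, sgn u i * f (X i) := by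
  rw [imbalance, ← Finset.sum_add_sum_compl (A ∪ A.image g), h.sum_union_image_eq_zero, zero_add]

theorem imbalance_le (h : IsExactMatching u X A g) {f : 𝒳 → ℝ} (hf : ∀ x, |f x| ≤ 1) :
    imbalance u X f ≤ n - 2 * #A :=
  calc imbalance u X f = ∑ i ∈ (A ∪ A.image g)ᶜ, sgn u i * f (X i) := h.imbalance_eq f
    _ ≤ ∑ i ∈ (A ∪ A.image g)ᶜ, (1 : ℝ) := Finset.sum_le_sum fun i _ =>
        (le_abs_self _).trans (by rw [abs_mul, abs_sgn, one_mul]; exact hf _)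
    _ = n - 2 * #A := by rw [Finset.sum_const, nsmul_one, h.cast_card_compl]

theorem insert (h : IsExactMatching u X A g) {i j : Fin n} (hi : u i = true) (hiA : i ∉ A)
    (hj : u j = false) (hjA : j ∉ A.image g) (hX : X i = X j) :
    IsExactMatching u X (insert i A) (Function.update g i j) := by
  have hupd : Set.EqOn (Function.update g i j) g A := fun k hk =>
    Function.update_of_ne (ne_of_mem_of_not_mem hk hiA) _ _
  refine ⟨?_, fun k hk => ?_⟩
  · rw [Finset.coe_insert, Set.injOn_insert (Finset.mem_coe.not.mpr hiA), hupd.image_eq,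
      Function.update_self, ← Finset.coe_image]
    exact ⟨h.1.congr hupd.symm, hjA⟩
  · rcases Finset.mem_insert.mp hk with rfl | hkA
    · rw [Function.update_self]
      exact ⟨sgn_eq_one_iff.mpr hi, sgn_eq_neg_one_iff.mpr hj, hX⟩
    · rw [hupd hkA]
      exact h.2 k hkA

variable (hmax : ∀ A' g', IsExactMatching u X A' g' → #A' ≤ #A)
include hmax

theorem covariate_ne_of_maximal (h : IsExactMatching u X A g) {i j : Fin n} (hi : u i = true)
    (hiA : i ∉ A) (hj : u j = false) (hjA : j ∉ A.image g) : X i ≠ X j := fun hX => by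
  have hcard := hmax _ _ (h.insert hi hiA hj hjA hX)
  rw [Finset.card_insert_of_notMem hiA] at hcard
  omega

theorem exists_imbalance_eq_of_maximal (h : IsExactMatching u X A g) :
    ∃ f : 𝒳 → ℝ, (∀ x, |f x| ≤ 1) ∧ imbalance u X f = n - 2 * #A := by
  refine ⟨fun x => if ∃ i ∉ A, u i = true ∧ X i = x then 1 else -1,
    fun x => by dsimp only; split_ifs <;> norm_num, ?_⟩
  rw [h.imbalance_eq, ← h.cast_card_compl, Finset.cast_card]
  refine Finset.sum_congr rfl fun i hi => ?_
  rw [Finset.mem_compl, Finset.mem_union, not_or] at hi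
  obtain ⟨hiA, hiB⟩ := hi
  cases hu : u i
  · rw [sgn_eq_neg_one_iff.mpr hu, if_neg]
    · norm_num
    rintro ⟨k, hkA, hk, hX⟩
    exact covariate_ne_of_maximal hmax h hk hkA hu hiB hX
  · rw [sgn_eq_one_iff.mpr hu, if_pos ⟨i, hiA, hu, rfl⟩, one_mul]

end IsExactMatching

end

theorem stmt5_general {𝒳 : Type*} (n : ℕ) (hn : 0 < n) (X : Fin n → 𝒳)
    (u : Fin n → Bool) (q : ℕ)
    (hq : IsGreatest {q' : ℕ | ∃ (A : Finset (Fin n)) (g : Fin n → Fin n),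
        Set.InjOn g ↑A ∧
        (∀ i ∈ A, sgn u i = 1 ∧ sgn u (g i) = -1 ∧ X i = X (g i)) ∧
        q' = A.card} q) :
    sSup {r : ℝ | ∃ f : 𝒳 → ℝ, (∀ x, |f x| ≤ 1) ∧
        r = (2 / (n : ℝ)) * ∑ i, sgn u i * f (X i)}
      = 2 - 4 * (q : ℝ) / (n : ℝ) := by
  obtain ⟨⟨A, g, hinj, hA, rfl⟩, hmax⟩ := hq
  have hM : IsExactMatching u X A g := ⟨hinj, hA⟩
  have hmax' : ∀ A' g', IsExactMatching u X A' g' → A'.card ≤ A.card :=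
    fun A' g' h' => hmax ⟨A', g', h'.1, h'.2, rfl⟩
  obtain ⟨f₀, hf₀, himb⟩ := hM.exists_imbalance_eq_of_maximal hmax'
  have hn' : (0 : ℝ) < n := Nat.cast_pos.mpr hn
  refine IsGreatest.csSup_eq ⟨⟨f₀, hf₀, ?_⟩, ?_⟩
  · change _ = 2 / (n : ℝ) * imbalance u X f₀
    rw [himb]
    field_simp
    ring
  · rintro r ⟨f, hf, rfl⟩
    calc 2 / (n : ℝ) * imbalance u X f ≤ 2 / n * (n - 2 * A.card) := by
          gcongr
          exact hM.imbalance_le hf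
      _ = 2 - 4 * A.card / n := by
          field_simp
          ring

/-- If `q` is the maximum cardinality of a collection of pairwise disjoint pairs matching
a `+1`-subject to a `−1`-subject with identical covariates (a maximal perfect exact match
across the two groups), then the worst-case imbalance over the sup-norm unit ball equals
`2 − 4q/n`. Hence the sup-norm optimal design is incomplete blocking. -/
theorem stmt5 {𝒳 : Type*} (n : ℕ) (hn : 0 < n) (hne : Even n) (X : Fin n → 𝒳)
    (u : Fin n → Bool) (hu : ∑ i, sgn u i = 0) (q : ℕ)
    (hq : IsGreatest {q' : ℕ | ∃ (A : Finset (Fin n)) (g : Fin n → Fin n),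
        Set.InjOn g ↑A ∧
        (∀ i ∈ A, sgn u i = 1 ∧ sgn u (g i) = -1 ∧ X i = X (g i)) ∧
        q' = A.card} q) :
    sSup {r : ℝ | ∃ f : 𝒳 → ℝ, (∀ x, |f x| ≤ 1) ∧
        r = (2 / (n : ℝ)) * ∑ i, sgn u i * f (X i)}
      = 2 - 4 * (q : ℝ) / (n : ℝ) :=
  stmt5_general n hn X u q hq
end

section
/- Let (𝒳, δ) be a metric space, n even, and X_1,…,X_n ∈ 𝒳. Then min over u ∈ U of [ sup over all 1-Lipschitz functions f : 𝒳 → ℝ of Σ_{i=1}^n u_i f(X_i) ] equals the minimum over all perfect matchings μ of {1,…,n} (partitions of {1,…,n} into n/2 unordered pairs) of Σ_{{i,j} ∈ μ} δ(X_i, X_j). (The pure-strategy optimal design for the Lipschitz norm is optimal pairwise matching.) -/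
/-!
A balanced assignment `u` and a bijection `e` from its treated to its control units give a
perfect matching; for a 1-Lipschitz `f` the imbalance `∑ i, u i * f (X i)` is the sum over pairs
of `f (X q) - f (X (e q)) ≤ δ (X q) (X (e q))`, so every matching bounds the worst-case imbalance
of the assignment that orients it.

Conversely, fix `u` and take `e` of minimal cost. Optimality of `e` rules out cycles of positive
gain, so the longest-walk potential `f v`, the maximal gain of a walk from `v` that repeatedly
travels to some `X q` and then along the pair to `X (e q)`, is 1-Lipschitz and satisfies
`f (X q) - f (X (e q)) ≥ δ (X q) (X (e q))` (discrete Kantorovich–Rubinstein duality).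
This `f` shows that the worst-case imbalance of `u` is at least the cost of the matching `e`.
-/

open scoped Classical BigOperators

open Finset Function Equiv

lemma sum_apply_swap_mul {ι : Type*} [Fintype ι] {g : ι → ι → ℝ} {τ : Perm ι} {j a m : ι}
    (hj : τ j = j) (hm : τ m = a) (hja : j ≠ a) :
    ∑ i, g i ((swap j a * τ) i) = ∑ i, g i (τ i) + (g j a - g j j) + (g m j - g m a) := by
  have hjm : j ≠ m := fun h => hja (by rw [← hj, h, hm])
  have hdiff : ∑ i, (g i ((swap j a * τ) i) - g i (τ i)) = (g j a - g j j) + (g m j - g m a) := by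
    rw [Fintype.sum_eq_add j m hjm]
    · simp [hj, hm]
    · rintro i ⟨hij, him⟩
      have h1 : τ i ≠ j := fun h => hij (τ.injective (h.trans hj.symm))
      have h2 : τ i ≠ a := fun h => him (τ.injective (h.trans hm.symm))
      simp [swap_apply_of_ne_of_ne h1 h2]
  rw [Finset.sum_sub_distrib] at hdiff
  linarith

section Walk

variable {ι 𝒳 : Type*}

def walkEnd (y : ι → 𝒳) (v : 𝒳) (L : List ι) : 𝒳 := (v :: L.map y).getLast (List.cons_ne_nil _ _)

@[simp] lemma walkEnd_nil (y : ι → 𝒳) (v : 𝒳) : walkEnd y v [] = v := rfl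

@[simp] lemma walkEnd_cons (y : ι → 𝒳) (v : 𝒳) (i : ι) (L : List ι) :
    walkEnd y v (i :: L) = walkEnd y (y i) L :=
  List.getLast_cons_cons

lemma walkEnd_eq_getLast (y : ι → 𝒳) (i : ι) (L : List ι) :
    walkEnd y (y i) L = y ((i :: L).getLast (List.cons_ne_nil _ _)) :=
  List.getLast_map (f := y) (l := i :: L) (List.cons_ne_nil _ _)

variable [PseudoMetricSpace 𝒳] (x y : ι → 𝒳)

noncomputable def walkGain : 𝒳 → List ι → ℝ
  | _, [] => 0
  | v, i :: L => dist (x i) (y i) - dist v (x i) + walkGain (y i) L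

lemma walkGain_append (A B : List ι) (v : 𝒳) :
    walkGain x y v (A ++ B) = walkGain x y v A + walkGain x y (walkEnd y v A) B := by
  induction A generalizing v with
  | nil => simp [walkGain]
  | cons i A ih => simp only [List.cons_append, walkGain, ih, walkEnd_cons]; ring

lemma walkGain_sub_le (L : List ι) (v w : 𝒳) : walkGain x y v L - walkGain x y w L ≤ dist v w := by
  cases L with
  | nil => simp [walkGain]
  | cons i L => simp only [walkGain]; linarith [dist_triangle w v (x i), dist_comm v w]

variable [Fintype ι]

lemma walkGain_cycle (A : List ι) (j : ι) (h : (j :: A).Nodup) :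
    walkGain x y (y j) A + dist (x j) (y j) - dist (walkEnd y (y j) A) (x j) =
      ∑ i, dist (x i) (y i) - ∑ i, dist (x ((j :: A).formPerm i)) (y i) := by
  induction A generalizing j with
  | nil => simp [walkGain, dist_comm]
  | cons a A ih =>
    have hja : j ≠ a := fun hja => (List.nodup_cons.1 h).1 (hja ▸ List.mem_cons_self)
    rw [List.formPerm_cons_cons, sum_apply_swap_mul (g := fun i k => dist (x k) (y i))
      (List.formPerm_apply_of_notMem (List.nodup_cons.1 h).1) (List.formPerm_apply_getLast a A) hja,
      walkEnd_cons]
    have ih := ih a h.of_cons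
    rw [walkEnd_eq_getLast] at ih ⊢
    simp only [walkGain]
    set m := (a :: A).getLast (List.cons_ne_nil _ _)
    linarith [dist_comm (x a) (y j), dist_comm (x j) (y m), dist_comm (x a) (y m)]

lemma walkGain_cycle_nonpos
    (H : ∀ σ : Perm ι, ∑ i, dist (x i) (y i) ≤ ∑ i, dist (x (σ i)) (y i))
    (A : List ι) (j : ι) (h : (j :: A).Nodup) :
    walkGain x y (y j) A + dist (x j) (y j) - dist (walkEnd y (y j) A) (x j) ≤ 0 := by
  rw [walkGain_cycle x y A j h]
  linarith [H (j :: A).formPerm]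

instance : Finite {L : List ι // L.Nodup} :=
  ((List.finite_length_le ι (Fintype.card ι)).subset
    fun _ hL => List.Nodup.length_le_card hL).to_subtype

instance : Nonempty {L : List ι // L.Nodup} := ⟨⟨[], List.nodup_nil⟩⟩

noncomputable def walkPotential (v : 𝒳) : ℝ := ⨆ L : {L : List ι // L.Nodup}, walkGain x y v L

lemma walkGain_le_walkPotential (v : 𝒳) {L : List ι} (hL : L.Nodup) :
    walkGain x y v L ≤ walkPotential x y v :=
  le_ciSup (f := fun L : {L : List ι // L.Nodup} => walkGain x y v L)
    (Set.finite_range _).bddAbove ⟨L, hL⟩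

lemma exists_walkPotential_eq (v : 𝒳) :
    ∃ L : List ι, L.Nodup ∧ walkPotential x y v = walkGain x y v L := by
  obtain ⟨⟨L, hL⟩, hmax⟩ :=
    exists_eq_ciSup_of_finite (f := fun L : {L : List ι // L.Nodup} => walkGain x y v L)
  exact ⟨L, hL, hmax.symm⟩

lemma lipschitzWith_walkPotential : LipschitzWith 1 (walkPotential x y) := by
  refine LipschitzWith.of_le_add fun v w => ?_
  obtain ⟨L, hL, hv⟩ := exists_walkPotential_eq x y v
  linarith [walkGain_sub_le x y L v w, walkGain_le_walkPotential x y w hL]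

lemma exists_walkPotential_eq_of_notMem
    (H : ∀ σ : Perm ι, ∑ i, dist (x i) (y i) ≤ ∑ i, dist (x (σ i)) (y i)) (j : ι) :
    ∃ L : List ι, L.Nodup ∧ j ∉ L ∧ walkPotential x y (y j) = walkGain x y (y j) L := by
  obtain ⟨L, hL, hmax⟩ := exists_walkPotential_eq x y (y j)
  by_cases hj : j ∈ L
  · -- cut the maximal walk at `j` into a cycle, of nonpositive gain, and a walk avoiding `j`
    obtain ⟨A, B, rfl⟩ := List.append_of_mem hj
    have hjA : (j :: A).Nodup :=
      (List.nodup_middle.1 hL).sublist ((List.sublist_append_left A B).cons_cons j)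
    obtain ⟨hjB, hB⟩ := List.nodup_cons.1 hL.of_append_right
    refine ⟨B, hB, hjB, le_antisymm ?_ (walkGain_le_walkPotential x y _ hB)⟩
    rw [hmax, walkGain_append, walkGain]
    linarith [walkGain_cycle_nonpos x y H A j hjA]
  · exact ⟨L, hL, hj, hmax⟩

lemma dist_add_walkPotential_le
    (H : ∀ σ : Perm ι, ∑ i, dist (x i) (y i) ≤ ∑ i, dist (x (σ i)) (y i)) (j : ι) :
    dist (x j) (y j) + walkPotential x y (y j) ≤ walkPotential x y (x j) := by
  obtain ⟨L, hL, hj, hmax⟩ := exists_walkPotential_eq_of_notMem x y H j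
  have := walkGain_le_walkPotential x y (x j) (List.nodup_cons.2 ⟨hj, hL⟩)
  rw [walkGain, dist_self] at this
  linarith

end Walk

section Pairing

variable {α : Type*} {p : α → Prop} [DecidablePred p] (e : {a // p a} ≃ {a // ¬p a})

def swapAlong (a : α) : α := if h : p a then e ⟨a, h⟩ else e.symm ⟨a, h⟩

lemma swapAlong_of_pos (a : {a // p a}) : swapAlong e a = e a := dif_pos a.2

lemma swapAlong_of_neg (a : {a // ¬p a}) : swapAlong e a = e.symm a := dif_neg a.2

lemma swapAlong_involutive : Involutive (swapAlong e) := by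
  intro a
  by_cases h : p a
  · rw [swapAlong_of_pos e ⟨a, h⟩, swapAlong_of_neg, Equiv.symm_apply_apply]
  · rw [swapAlong_of_neg e ⟨a, h⟩, swapAlong_of_pos, Equiv.apply_symm_apply]

lemma swapAlong_ne (a : α) : swapAlong e a ≠ a := by
  by_cases h : p a
  · rw [swapAlong_of_pos e ⟨a, h⟩]
    exact fun h' => (e ⟨a, h⟩).2 (by rw [h']; exact h)
  · rw [swapAlong_of_neg e ⟨a, h⟩]
    exact fun h' => h (by rw [← h']; exact (e.symm ⟨a, h⟩).2)

variable [Fintype α]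

lemma sum_eq_sum_add_comp_equiv {M : Type*} [AddCommMonoid M] (g : α → M) :
    ∑ a, g a = ∑ q : {a // p a}, (g q + g (e q)) := by
  rw [← Fintype.sum_subtype_add_sum_subtype p g, ← Equiv.sum_comp e, Finset.sum_add_distrib]

lemma sum_dist_swapAlong {𝒳 : Type*} [PseudoMetricSpace 𝒳] (X : α → 𝒳) :
    ∑ a, dist (X a) (X (swapAlong e a)) = 2 * ∑ q : {a // p a}, dist (X q) (X (e q)) := by
  rw [sum_eq_sum_add_comp_equiv e, Finset.mul_sum]
  refine Finset.sum_congr rfl fun q _ => ?_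
  rw [swapAlong_of_pos, swapAlong_of_neg, Equiv.symm_apply_apply, dist_comm (X (e q))]
  ring

end Pairing

lemma sum_eq_zero_of_comp_eq_neg {α : Type*} [Fintype α] (π : Perm α) {w : α → ℝ}
    (hw : ∀ i, w (π i) = -w i) : ∑ i, w i = 0 := by
  have := Equiv.sum_comp π w
  simp only [hw, Finset.sum_neg_distrib] at this
  linarith

lemma sum_mul_le_half_sum_dist {α 𝒳 : Type*} [Fintype α] [PseudoMetricSpace 𝒳] (π : Perm α)
    {w : α → ℝ} (hw : ∀ i, w (π i) = -w i) (hw1 : ∀ i, |w i| ≤ 1) {f : 𝒳 → ℝ}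
    (hf : LipschitzWith 1 f) (X : α → 𝒳) :
    ∑ i, w i * f (X i) ≤ (1 / 2) * ∑ i, dist (X i) (X (π i)) := by
  have hterm : ∀ i, w i * (f (X i) - f (X (π i))) ≤ dist (X i) (X (π i)) := fun i =>
    calc w i * (f (X i) - f (X (π i))) ≤ |w i| * |f (X i) - f (X (π i))| := by
          rw [← abs_mul]; exact le_abs_self _
      _ ≤ 1 * dist (X i) (X (π i)) := by
          gcongr
          · exact hw1 i
          · simpa [Real.dist_eq] using hf.dist_le_mul (X i) (X (π i))
      _ = dist (X i) (X (π i)) := one_mul _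
  have hswap : ∑ i, w i * f (X (π i)) = -∑ i, w i * f (X i) := by
    rw [← Equiv.sum_comp π (fun i => w i * f (X i)), ← Finset.sum_neg_distrib]
    simp [hw]
  have := Finset.sum_le_sum fun i (_ : i ∈ Finset.univ) => hterm i
  simp only [mul_sub, Finset.sum_sub_distrib, hswap] at this
  linarith

section Sign

variable {n : ℕ} (u : Fin n → Bool)

lemma sgn_of_pos {i : Fin n} (h : u i) : sgn u i = 1 := if_pos h

lemma sgn_of_neg {i : Fin n} (h : ¬u i) : sgn u i = -1 := if_neg h

lemma sum_sgn_mul_eq (e : {i // u i} ≃ {i // ¬u i}) (g : Fin n → ℝ) :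
    ∑ i, sgn u i * g i = ∑ q : {i // u i}, (g q - g (e q)) := by
  rw [sum_eq_sum_add_comp_equiv e]
  refine Finset.sum_congr rfl fun q _ => ?_
  rw [sgn_of_pos u q.2, sgn_of_neg u (e q).2]
  ring

lemma nonempty_equiv_of_sum_sgn_eq_zero (hu : ∑ i, sgn u i = 0) :
    Nonempty ({i // u i} ≃ {i // ¬u i}) := by
  refine ⟨Fintype.equivOfCardEq ?_⟩
  have hpos : ∑ i : {i // u i}, sgn u i = Fintype.card {i // u i} := by
    simp [Finset.sum_congr rfl fun (i : {i // u i}) _ => sgn_of_pos u i.2]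
  have hneg : ∑ i : {i // ¬u i}, sgn u i = -Fintype.card {i // ¬u i} := by
    simp [Finset.sum_congr rfl fun (i : {i // ¬u i}) _ => sgn_of_neg u i.2]
  rw [← Fintype.sum_subtype_add_sum_subtype (fun i => u i = true), hpos, hneg] at hu
  exact_mod_cast (by linarith : (Fintype.card {i // u i} : ℝ) = Fintype.card {i // ¬u i})

end Sign

section Design

variable {n : ℕ} {𝒳 : Type*} [PseudoMetricSpace 𝒳] (X : Fin n → 𝒳)

lemma abs_sgn_le (u : Fin n → Bool) (i : Fin n) : |sgn u i| ≤ 1 := by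
  unfold sgn; split_ifs <;> norm_num

lemma sgn_swapAlong (u : Fin n → Bool) (e : {i // u i} ≃ {i // ¬u i}) (i : Fin n) :
    sgn u (swapAlong e i) = -sgn u i := by
  by_cases h : u i
  · rw [swapAlong_of_pos e ⟨i, h⟩, sgn_of_neg u (e _).2, sgn_of_pos u h]
  · rw [swapAlong_of_neg e ⟨i, h⟩, sgn_of_pos u (e.symm _).2, sgn_of_neg u h, neg_neg]

lemma bddAbove_sum_sgn_mul {u : Fin n → Bool} (hu : ∑ i, sgn u i = 0) :
    BddAbove {s | ∃ f : 𝒳 → ℝ, LipschitzWith 1 f ∧ s = ∑ i, sgn u i * f (X i)} := by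
  obtain ⟨e⟩ := nonempty_equiv_of_sum_sgn_eq_zero u hu
  refine ⟨(1 / 2) * ∑ i, dist (X i) (X (swapAlong e i)), ?_⟩
  rintro _ ⟨f, hf, rfl⟩
  exact sum_mul_le_half_sum_dist (Involutive.toPerm _ (swapAlong_involutive e))
    (sgn_swapAlong u e) (abs_sgn_le u) hf X

lemma exists_balanced_sum_sgn_mul_le (π : Perm (Fin n)) (hfix : ∀ i, π i ≠ i)
    (hinv : ∀ i, π (π i) = i) :
    ∃ u : Fin n → Bool, ∑ i, sgn u i = 0 ∧ ∀ f : 𝒳 → ℝ, LipschitzWith 1 f →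
      ∑ i, sgn u i * f (X i) ≤ (1 / 2) * ∑ i, dist (X i) (X (π i)) := by
  set u : Fin n → Bool := fun i => decide (i < π i)
  have hu : ∀ i, sgn u (π i) = -sgn u i := by
    intro i
    rcases (hfix i).lt_or_gt with h | h
    · rw [sgn_of_pos u (by simpa [u, hinv] using h), sgn_of_neg u (by simpa [u] using h.le),
        neg_neg]
    · rw [sgn_of_neg u (by simpa [u, hinv] using h.le), sgn_of_pos u (by simpa [u] using h)]
  exact ⟨u, sum_eq_zero_of_comp_eq_neg π hu,
    fun f hf => sum_mul_le_half_sum_dist π hu (abs_sgn_le u) hf X⟩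

lemma exists_matching_half_sum_dist_le {u : Fin n → Bool} (hu : ∑ i, sgn u i = 0) :
    ∃ π : Perm (Fin n), (∀ i, π i ≠ i) ∧ (∀ i, π (π i) = i) ∧
      ∃ f : 𝒳 → ℝ, LipschitzWith 1 f ∧
        (1 / 2) * ∑ i, dist (X i) (X (π i)) ≤ ∑ i, sgn u i * f (X i) := by
  obtain ⟨e₀⟩ := nonempty_equiv_of_sum_sgn_eq_zero u hu
  obtain ⟨e, -, he⟩ := Finset.univ.exists_min_image
    (fun e : {i // u i} ≃ {i // ¬u i} => ∑ q : {i // u i}, dist (X q) (X (e q)))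
    ⟨e₀, Finset.mem_univ _⟩
  have hopt : ∀ σ : Perm {i // u i},
      ∑ q : {i // u i}, dist (X q) (X (e q)) ≤ ∑ q, dist (X (σ q)) (X (e q)) := fun σ =>
    (he (σ.symm.trans e) (Finset.mem_univ _)).trans_eq (by rw [← Equiv.sum_comp σ]; simp)
  refine ⟨Involutive.toPerm _ (swapAlong_involutive e), swapAlong_ne e, swapAlong_involutive e,
    walkPotential (fun q : {i // u i} => X q) (fun q => X (e q)),
    lipschitzWith_walkPotential _ _, ?_⟩
  rw [Involutive.coe_toPerm, sum_dist_swapAlong, sum_sgn_mul_eq u e, one_div,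
    inv_mul_cancel_left₀ two_ne_zero]
  exact Finset.sum_le_sum fun q _ => by linarith [dist_add_walkPotential_le _ _ hopt q]

end Design

theorem stmt6_general {𝒳 : Type*} [MetricSpace 𝒳] (n : ℕ) (X : Fin n → 𝒳) :
    sInf {r : ℝ | ∃ u : Fin n → Bool, (∑ i, sgn u i = 0) ∧
        r = sSup {s : ℝ | ∃ f : 𝒳 → ℝ, LipschitzWith 1 f ∧
              s = ∑ i, sgn u i * f (X i)}}
      = sInf {c : ℝ | ∃ π : Equiv.Perm (Fin n), (∀ i, π i ≠ i) ∧ (∀ i, π (π i) = i) ∧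
          c = (1 / 2) * ∑ i, dist (X i) (X (π i))} := by
  refine csInf_eq_csInf_of_forall_exists_le ?_ ?_
  · rintro _ ⟨u, hu, rfl⟩
    obtain ⟨π, hfix, hinv, f, hf, hle⟩ := exists_matching_half_sum_dist_le X hu
    exact ⟨_, ⟨π, hfix, hinv, rfl⟩, hle.trans (le_csSup (bddAbove_sum_sgn_mul X hu) ⟨f, hf, rfl⟩)⟩
  · rintro _ ⟨π, hfix, hinv, rfl⟩
    obtain ⟨u, hu, hle⟩ := exists_balanced_sum_sgn_mul_le X π hfix hinv
    refine ⟨_, ⟨u, hu, rfl⟩, csSup_le ⟨0, fun _ => 0, LipschitzWith.const' 0, by simp⟩ ?_⟩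
    rintro _ ⟨f, hf, rfl⟩
    exact hle f hf

/-- The pure-strategy optimal design for the Lipschitz norm is optimal pairwise matching:
the minimum over balanced assignments `u ∈ U` of the worst-case imbalance over
1-Lipschitz functions equals the minimum total cost over perfect matchings
(fixed-point-free involutions, each pair counted once) of the pairwise distances. -/
theorem stmt6 {𝒳 : Type*} [MetricSpace 𝒳] (n : ℕ) (hne : Even n) (X : Fin n → 𝒳) :
    sInf {r : ℝ | ∃ u : Fin n → Bool, (∑ i, sgn u i = 0) ∧
        r = sSup {s : ℝ | ∃ f : 𝒳 → ℝ, LipschitzWith 1 f ∧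
              s = ∑ i, sgn u i * f (X i)}}
      = sInf {c : ℝ | ∃ π : Equiv.Perm (Fin n), (∀ i, π i ≠ i) ∧ (∀ i, π (π i) = i) ∧
          c = (1 / 2) * ∑ i, dist (X i) (X (π i))} :=
  stmt6_general n X
end

section
/- Let H be a real Hilbert space, φ_1,…,φ_n ∈ H with Gram matrix K_{ij} = ⟪φ_i, φ_j⟫, and let P ∈ ℝ^{n×n} be symmetric positive semidefinite. Then sup over f ∈ H with ‖f‖ ≤ 1 of Σ_{i,j=1}^n P_{ij} ⟪φ_i, f⟫ ⟪φ_j, f⟫ = λ_max(√K · P · √K), where √K is the positive semidefinite square root of K and λ_max denotes the largest eigenvalue. (The mixed-strategy RKHS imbalance metric equals the top eigenvalue of √K P √K.) -/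
/-!
Replacing `f` by its orthogonal projection `∑ⱼ uⱼ φⱼ` onto the span of the `φᵢ` keeps every
`⟪φᵢ, f⟫ = (K u)ᵢ` and does not increase the norm, and `‖∑ⱼ uⱼ φⱼ‖² = uᵀ K u`. With `Q = √K` and
`w = Q u` the objective becomes `wᵀ (Q P Q) w` under the constraint `wᵀ w ≤ 1`, a Rayleigh quotient,
so it is at most `λ_max`; conversely a unit eigenvector `w` of `Q P Q` with eigenvalue `λ > 0` is
attained by `u = λ⁻¹ P Q w`, for which `Q u = w`.
-/

open scoped BigOperators RealInnerProductSpace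

section
open scoped ComplexOrder

/-- The square root of a positive semidefinite matrix, as defined in the older Mathlib
(removed since then in favour of `CFC.sqrt`). -/
noncomputable def Matrix.PosSemidef.sqrt {n : Type*} {𝕜 : Type*} [Fintype n] [DecidableEq n]
    [RCLike 𝕜] {A : Matrix n n 𝕜} (hA : A.PosSemidef) : Matrix n n 𝕜 :=
  (hA.1.eigenvectorUnitary : Matrix n n 𝕜) *
    Matrix.diagonal (fun i => ((Real.sqrt (hA.1.eigenvalues i) : ℝ) : 𝕜)) *
    (star hA.1.eigenvectorUnitary : Matrix n n 𝕜)

end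

open Matrix
open scoped MatrixOrder ComplexOrder

theorem Matrix.PosSemidef.sqrt_eq_cfcSqrt {n 𝕜 : Type*} [Fintype n] [DecidableEq n] [RCLike 𝕜]
    {A : Matrix n n 𝕜} (hA : A.PosSemidef) : hA.sqrt = CFC.sqrt A := by
  rw [CFC.sqrt_eq_cfc, cfc_nnreal_eq_real _ A, hA.1.cfc_eq]
  simp [IsHermitian.cfc, PosSemidef.sqrt, Function.comp_def,
    max_eq_left (hA.eigenvalues_nonneg _)]

theorem Matrix.IsHermitian.dotProduct_mulVec_le {n : Type*} [Fintype n] [DecidableEq n]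
    {M : Matrix n n ℝ} (hM : M.IsHermitian) (w : n → ℝ) :
    w ⬝ᵥ M *ᵥ w ≤ (⨆ i, hM.eigenvalues i) * (w ⬝ᵥ w) := by
  have hle : M ≤ algebraMap ℝ _ (⨆ i, hM.eigenvalues i) := by
    refine le_algebraMap_of_spectrum_le (fun x hx => ?_) hM.isSelfAdjoint
    obtain ⟨i, rfl⟩ := hM.spectrum_real_eq_range_eigenvalues ▸ hx
    exact le_ciSup (Set.finite_range _).bddAbove i
  have := (nonneg_iff_posSemidef.mp (sub_nonneg.mpr hle)).dotProduct_mulVec_nonneg w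
  simp only [sub_mulVec, Algebra.algebraMap_eq_smul_one, smul_mulVec, one_mulVec,
    dotProduct_sub, dotProduct_smul, smul_eq_mul, sub_nonneg] at this
  exact this

theorem Matrix.IsSymm.mulVec_dotProduct {ι R : Type*} [Fintype ι] [CommSemiring R]
    {Q : Matrix ι ι R} (hQ : Q.IsSymm) (x y : ι → R) : Q *ᵥ x ⬝ᵥ y = x ⬝ᵥ Q *ᵥ y := by
  rw [dotProduct_comm, dotProduct_mulVec, ← mulVec_transpose, hQ.eq, dotProduct_comm]

theorem Matrix.IsSymm.mulVec_dotProduct_mulVec_mulVec {ι R : Type*} [Fintype ι] [CommSemiring R]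
    {Q : Matrix ι ι R} (hQ : Q.IsSymm) (A : Matrix ι ι R) (x : ι → R) :
    Q *ᵥ x ⬝ᵥ A *ᵥ (Q *ᵥ x) = x ⬝ᵥ (Q * A * Q) *ᵥ x := by
  rw [hQ.mulVec_dotProduct, mulVec_mulVec, mulVec_mulVec, Matrix.mul_assoc]

theorem sum_sum_mul_mul_eq_dotProduct_mulVec {ι R : Type*} [Fintype ι] [CommSemiring R]
    (A : Matrix ι ι R) (v : ι → R) : ∑ i, ∑ j, A i j * v i * v j = v ⬝ᵥ A *ᵥ v := by
  simp only [dotProduct, mulVec, Finset.mul_sum]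
  exact Finset.sum_congr rfl fun i _ => Finset.sum_congr rfl fun j _ => by ring

section Gram

variable {ι H : Type*} [Fintype ι] [NormedAddCommGroup H] [InnerProductSpace ℝ H] (φ : ι → H)

theorem inner_sum_smul_eq_gram_mulVec (u : ι → ℝ) (i : ι) :
    ⟪φ i, ∑ j, u j • φ j⟫ = (gram ℝ φ *ᵥ u) i := by
  simp [inner_sum, real_inner_smul_right, mulVec, dotProduct, gram_apply, mul_comm]

theorem norm_sum_smul_sq_eq_dotProduct_gram_mulVec (u : ι → ℝ) :
    ‖∑ j, u j • φ j‖ ^ 2 = u ⬝ᵥ gram ℝ φ *ᵥ u := by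
  simpa [real_inner_self_eq_norm_sq] using (star_dotProduct_gram_mulVec φ u u).symm

theorem exists_inner_eq_gram_mulVec (f : H) :
    ∃ u : ι → ℝ, (fun i => ⟪φ i, f⟫) = gram ℝ φ *ᵥ u ∧ u ⬝ᵥ gram ℝ φ *ᵥ u ≤ ‖f‖ ^ 2 := by
  set V := Submodule.span ℝ (Set.range φ)
  have : FiniteDimensional ℝ V := .span_of_finite ℝ (Set.finite_range φ)
  obtain ⟨u, hu⟩ := (Submodule.mem_span_range_iff_exists_fun ℝ).mp
    (V.orthogonalProjectionOnto f).2
  refine ⟨u, funext fun i => ?_, ?_⟩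
  · rw [← inner_sum_smul_eq_gram_mulVec, hu]
    exact (V.inner_orthogonalProjectionOnto_eq_of_mem_left
      ⟨φ i, Submodule.subset_span ⟨i, rfl⟩⟩ f).symm
  · rw [← norm_sum_smul_sq_eq_dotProduct_gram_mulVec, hu]
    gcongr
    exact V.norm_starProjection_apply_le f

end Gram

section Imbalance

variable {ι H : Type*} [Fintype ι] [NormedAddCommGroup H] [InnerProductSpace ℝ H]
  (φ : ι → H) {Q : Matrix ι ι ℝ} (hQ : Q.IsSymm) (hQQ : Q * Q = gram ℝ φ) (P : Matrix ι ι ℝ)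
include hQ hQQ

theorem dotProduct_gram_mulVec_eq (u : ι → ℝ) : u ⬝ᵥ gram ℝ φ *ᵥ u = Q *ᵥ u ⬝ᵥ Q *ᵥ u := by
  rw [hQ.mulVec_dotProduct, mulVec_mulVec, hQQ]

theorem sum_mul_inner_mul_inner_eq {f : H} {u : ι → ℝ}
    (hfu : (fun i => ⟪φ i, f⟫) = gram ℝ φ *ᵥ u) :
    ∑ i, ∑ j, P i j * ⟪φ i, f⟫ * ⟪φ j, f⟫ = Q *ᵥ u ⬝ᵥ (Q * P * Q) *ᵥ (Q *ᵥ u) := by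
  refine (sum_sum_mul_mul_eq_dotProduct_mulVec P _).trans ?_
  rw [hfu, ← hQQ, ← mulVec_mulVec, hQ.mulVec_dotProduct_mulVec_mulVec]

theorem sum_mul_inner_mul_inner_le_iSup_eigenvalues [DecidableEq ι]
    (hM : (Q * P * Q).IsHermitian) (hmax : 0 ≤ ⨆ i, hM.eigenvalues i) {f : H} (hf : ‖f‖ ≤ 1) :
    ∑ i, ∑ j, P i j * ⟪φ i, f⟫ * ⟪φ j, f⟫ ≤ ⨆ i, hM.eigenvalues i := by
  obtain ⟨u, hfu, hu⟩ := exists_inner_eq_gram_mulVec φ f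
  have hQu : Q *ᵥ u ⬝ᵥ Q *ᵥ u ≤ 1 := by
    rw [← dotProduct_gram_mulVec_eq φ hQ hQQ]
    exact hu.trans (pow_le_one₀ (norm_nonneg f) hf)
  calc ∑ i, ∑ j, P i j * ⟪φ i, f⟫ * ⟪φ j, f⟫
      = Q *ᵥ u ⬝ᵥ (Q * P * Q) *ᵥ (Q *ᵥ u) := sum_mul_inner_mul_inner_eq φ hQ hQQ P hfu
    _ ≤ (⨆ i, hM.eigenvalues i) * (Q *ᵥ u ⬝ᵥ Q *ᵥ u) := hM.dotProduct_mulVec_le _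
    _ ≤ ⨆ i, hM.eigenvalues i := mul_le_of_le_one_right hmax hQu

theorem exists_sum_mul_inner_mul_inner_eq_eigenvalue [DecidableEq ι]
    (hM : (Q * P * Q).IsHermitian) (k : ι) (hk : 0 ≤ hM.eigenvalues k) :
    ∃ f : H, ‖f‖ ≤ 1 ∧ ∑ i, ∑ j, P i j * ⟪φ i, f⟫ * ⟪φ j, f⟫ = hM.eigenvalues k := by
  rcases hk.eq_or_lt with hzero | hpos
  · exact ⟨0, by simp, by simp [← hzero]⟩
  set w : ι → ℝ := ⇑(hM.eigenvectorBasis k)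
  have hMw : (Q * P * Q) *ᵥ w = hM.eigenvalues k • w := hM.mulVec_eigenvectorBasis k
  have hww : w ⬝ᵥ w = 1 := by
    have h := real_inner_self_eq_norm_sq (hM.eigenvectorBasis k)
    rw [hM.eigenvectorBasis.orthonormal.1 k, one_pow] at h
    rwa [EuclideanSpace.inner_eq_star_dotProduct, star_trivial] at h
  set u := (hM.eigenvalues k)⁻¹ • P *ᵥ (Q *ᵥ w)
  have hQu : Q *ᵥ u = w := by
    rw [mulVec_smul, mulVec_mulVec, mulVec_mulVec, hMw, smul_smul, inv_mul_cancel₀ hpos.ne',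
      one_smul]
  refine ⟨∑ j, u j • φ j, ?_, ?_⟩
  · rw [← sq_le_one_iff₀ (norm_nonneg _), norm_sum_smul_sq_eq_dotProduct_gram_mulVec,
      dotProduct_gram_mulVec_eq φ hQ hQQ, hQu, hww]
  · rw [sum_mul_inner_mul_inner_eq φ hQ hQQ P (funext (inner_sum_smul_eq_gram_mulVec φ u)), hQu,
      hMw, dotProduct_smul, hww, smul_eq_mul, mul_one]

end Imbalance

/-- The mixed-strategy RKHS imbalance metric equals the top eigenvalue of `√K P √K`:
for feature vectors `φᵢ` with Gram matrix `K` and `P` symmetric positive semidefinite,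
`sup_{‖f‖ ≤ 1} ∑_{i,j} P_{ij} ⟪φᵢ, f⟫ ⟪φⱼ, f⟫ = λ_max(√K P √K)`. -/
theorem stmt10 {H : Type*} [NormedAddCommGroup H] [InnerProductSpace ℝ H]
    (n : ℕ) (φ : Fin n → H)
    (K : Matrix (Fin n) (Fin n) ℝ) (hKdef : ∀ i j, K i j = ⟪φ i, φ j⟫)
    (hK : K.PosSemidef)
    (P : Matrix (Fin n) (Fin n) ℝ) (hP : P.PosSemidef)
    (hM : (hK.sqrt * P * hK.sqrt).IsHermitian) :
    sSup {r : ℝ | ∃ f : H, ‖f‖ ≤ 1 ∧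
        r = ∑ i, ∑ j, P i j * ⟪φ i, f⟫ * ⟪φ j, f⟫}
      = ⨆ i, hM.eigenvalues i := by
  set S := {r : ℝ | ∃ f : H, ‖f‖ ≤ 1 ∧ r = ∑ i, ∑ j, P i j * ⟪φ i, f⟫ * ⟪φ j, f⟫}
  have hQ : hK.sqrt.PosSemidef :=
    hK.sqrt_eq_cfcSqrt ▸ nonneg_iff_posSemidef.mp (CFC.sqrt_nonneg K)
  have hQQ : hK.sqrt * hK.sqrt = gram ℝ φ := by
    rw [hK.sqrt_eq_cfcSqrt, CFC.sqrt_mul_sqrt_self K hK.nonneg]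
    exact Matrix.ext hKdef
  have hQsymm : hK.sqrt.IsSymm := isHermitian_iff_isSymm.mp hQ.1
  have hMpsd : (hK.sqrt * P * hK.sqrt).PosSemidef := by
    have h := hP.conjTranspose_mul_mul_same hK.sqrt
    rwa [hQ.1.eq] at h
  have hmax : 0 ≤ ⨆ i, hM.eigenvalues i := Real.iSup_nonneg hMpsd.eigenvalues_nonneg
  have hzero : (0 : ℝ) ∈ S := ⟨0, by simp, by simp⟩
  have hle : ∀ r ∈ S, r ≤ ⨆ i, hM.eigenvalues i := by
    rintro r ⟨f, hf, rfl⟩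
    exact sum_mul_inner_mul_inner_le_iSup_eigenvalues φ hQsymm hQQ P hM hmax hf
  have hbdd : BddAbove S := ⟨_, hle⟩
  refine le_antisymm (csSup_le ⟨0, hzero⟩ hle) (Real.iSup_le (fun i => ?_) (le_csSup hbdd hzero))
  obtain ⟨f, hf, hfi⟩ := exists_sum_mul_inner_mul_inner_eq_eigenvalue φ hQsymm hQQ P hM i
    (hMpsd.eigenvalues_nonneg i)
  exact le_csSup hbdd ⟨f, hf, hfi.symm⟩
end

section
/- Let m ≥ 2, p ≥ 1, n = mp, W an even assignment, 𝒳 a set, X_1,…,X_n ∈ 𝒳, f_1,…,f_m : 𝒳 → ℝ, and Y ∈ ℝ^{n×m}; set ε_{ik} = Y_{ik} − f_k(X_i). For treatments k ≠ k' define τ̂_{kk'} = (1/p) Σ_{i : W_i = k} Y_{ik} − (1/p) Σ_{i : W_i = k'} Y_{ik'}, SATE_{kk'} = (1/n) Σ_{i=1}^n (Y_{ik} − Y_{ik'}), B_{kl}(f) = (1/p) Σ_{i=1}^n (w_{ik} − w_{il}) f(X_i), D_{kk'} = (1/m) Σ_{l ≠ k} B_{kl}(f_k) − (1/m) Σ_{l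 ≠ k'} B_{k'l}(f_{k'}), and E_{kk'} = (1/n) Σ_{i=1}^n ((m·w_{ik} − 1) ε_{ik} − (m·w_{ik'} − 1) ε_{ik'}). Then the algebraic identity τ̂_{kk'} = SATE_{kk'} + D_{kk'} + E_{kk'} holds. -/
/-!
Expand every term subject by subject. Because the weights `w i ·` sum to one, the imbalance
`∑_{l ≠ k} B_{kl}(f_k)` carries the weight `m w_{ik} - 1` on `f_k(X_i)`, which cancels the
`f`-part of the residual term; with `1/n = (1/m)(1/p)` what remains is
`(1/p)(w_{ik} Y_{ik} - w_{ik'} Y_{ik'})`, i.e. the estimator.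
-/

open Finset

section Weights

variable {ι κ R : Type*} [Fintype ι] [Fintype κ] [DecidableEq κ] [CommRing R]

theorem sum_filter_ne_sub_eq_of_sum_eq_one (v : κ → R) (hv : ∑ l, v l = 1) (k : κ) :
    ∑ l ∈ univ.filter (· ≠ k), (v k - v l) = Fintype.card κ * v k - 1 := by
  rw [sum_filter_of_ne fun l _ hl => by rintro rfl; simp at hl, sum_sub_distrib, sum_const,
    hv, card_univ, nsmul_eq_mul]

theorem sum_filter_ne_sum_weight_sub_mul (w : ι → κ → R) (hw : ∀ i, ∑ l, w i l = 1)
    (g : ι → R) (k : κ) :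
    ∑ l ∈ univ.filter (· ≠ k), ∑ i, (w i k - w i l) * g i
      = ∑ i, (Fintype.card κ * w i k - 1) * g i := by
  rw [sum_comm]
  refine sum_congr rfl fun i _ => ?_
  rw [← sum_mul, sum_filter_ne_sub_eq_of_sum_eq_one (w i) (hw i)]

end Weights

theorem stmt14_general {𝒳 : Type*} (m p n : ℕ) (hn : n = m * p)
    (W : Fin n → Fin m)
    (X : Fin n → 𝒳) (f : Fin m → 𝒳 → ℝ) (Y : Fin n → Fin m → ℝ)
    (ε : Fin n → Fin m → ℝ) (hε : ∀ i k, ε i k = Y i k - f k (X i))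
    (w : Fin n → Fin m → ℝ) (hw : ∀ i l, w i l = if W i = l then 1 else 0)
    (B : Fin m → Fin m → (𝒳 → ℝ) → ℝ)
    (hB : ∀ k l g, B k l g = (1 / (p : ℝ)) * ∑ i, (w i k - w i l) * g (X i))
    (k k' : Fin m) :
    (1 / (p : ℝ)) * (∑ i ∈ Finset.univ.filter fun i => W i = k, Y i k)
        - (1 / (p : ℝ)) * (∑ i ∈ Finset.univ.filter fun i => W i = k', Y i k')
      = (1 / (n : ℝ)) * (∑ i, (Y i k - Y i k'))
        + ((1 / (m : ℝ)) * (∑ l ∈ Finset.univ.filter fun l => l ≠ k, B k l (f k))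
            - (1 / (m : ℝ)) * (∑ l ∈ Finset.univ.filter fun l => l ≠ k', B k' l (f k')))
        + (1 / (n : ℝ)) * ∑ i, (((m : ℝ) * w i k - 1) * ε i k
            - ((m : ℝ) * w i k' - 1) * ε i k') := by
  have hm : (m : ℝ)⁻¹ * m = 1 := inv_mul_cancel₀ (Nat.cast_ne_zero.mpr (Fin.pos k).ne')
  have hinv_n : (1 / (n : ℝ)) = 1 / m * (1 / p) := by rw [hn, Nat.cast_mul, one_div_mul_one_div]
  have hsum_w : ∀ i, ∑ l, w i l = 1 := fun i => by simp [hw]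
  have hassigned : ∀ l, ∑ i ∈ univ.filter fun i => W i = l, Y i l = ∑ i, w i l * Y i l :=
    fun l => by simp [sum_filter, hw]
  have himbalance : ∀ l, ∑ l' ∈ univ.filter fun l' => l' ≠ l, B l l' (f l)
      = 1 / p * ∑ i, (m * w i l - 1) * f l (X i) := fun l => by
    simp only [hB, ← mul_sum]
    rw [sum_filter_ne_sum_weight_sub_mul w hsum_w, Fintype.card_fin]
  rw [hassigned, hassigned, himbalance, himbalance, hinv_n]
  simp only [hε, mul_sum, ← sum_add_distrib, ← sum_sub_distrib]
  refine sum_congr rfl fun i _ => ?_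
  linear_combination (-(1 / p) * (w i k * Y i k - w i k' * Y i k')) * hm

/-- The algebraic decomposition `τ̂_{kk'} = SATE_{kk'} + D_{kk'} + E_{kk'}` of the
mean-difference estimator into the sample average treatment effect, the imbalance term
in the regression functions, and the residual term. -/
theorem stmt14 {𝒳 : Type*} (m p n : ℕ) (hm : 2 ≤ m) (hp : 1 ≤ p) (hn : n = m * p)
    (W : Fin n → Fin m)
    (hW : ∀ k, (Finset.univ.filter fun i => W i = k).card = p)
    (X : Fin n → 𝒳) (f : Fin m → 𝒳 → ℝ) (Y : Fin n → Fin m → ℝ)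
    (ε : Fin n → Fin m → ℝ) (hε : ∀ i k, ε i k = Y i k - f k (X i))
    (w : Fin n → Fin m → ℝ) (hw : ∀ i l, w i l = if W i = l then 1 else 0)
    (B : Fin m → Fin m → (𝒳 → ℝ) → ℝ)
    (hB : ∀ k l g, B k l g = (1 / (p : ℝ)) * ∑ i, (w i k - w i l) * g (X i))
    (k k' : Fin m) (hkk' : k ≠ k') :
    (1 / (p : ℝ)) * (∑ i ∈ Finset.univ.filter fun i => W i = k, Y i k)
        - (1 / (p : ℝ)) * (∑ i ∈ Finset.univ.filter fun i => W i = k', Y i k')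
      = (1 / (n : ℝ)) * (∑ i, (Y i k - Y i k'))
        + ((1 / (m : ℝ)) * (∑ l ∈ Finset.univ.filter fun l => l ≠ k, B k l (f k))
            - (1 / (m : ℝ)) * (∑ l ∈ Finset.univ.filter fun l => l ≠ k', B k' l (f k')))
        + (1 / (n : ℝ)) * ∑ i, (((m : ℝ) * w i k - 1) * ε i k
            - ((m : ℝ) * w i k' - 1) * ε i k') :=
  stmt14_general m p n hn W X f Y ε hε w hw B hB k k'
end

section
/- Let m ≥ 2, p ≥ 1, n = mp, let σ be a treatment-symmetric design on even assignments, let v, v' ∈ ℝⁿ, and let k ≠ k' be treatments. Define Z(w) = Σ_W σ(W) B_{12}(W, w)² for w ∈ ℝⁿ, and D(W) = (1/m) Σ_{l ≠ k} B_{kl}(W, v) − (1/m) Σ_{l ≠ k'} B_{k'l}(W, v'). Suppose r, r', M ≥ 0 satisfy Z(v) ≤ r²M, Z(v') ≤ r'²M, and Z(v + v') ≤ (r + r')²M. Then Σ_W σ(W) D(W)² ≤ ((r + r')²/2)(1 − 1/m) M. (The variance of the bias term of an optimal design is bounded by the expected optimal imbalance scaled by the norms of the regression functions.) -/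
/-!
Write `u_a(W, x) = (1/p) ∑ᵢ (w_{ia} − 1/m) xᵢ`, so that `B_{ab} = u_a − u_b`, `∑ₐ u_a = 0` and
`D = u_k(v) − u_{k'}(v')`. Under a treatment-symmetric design the mean of a permutation-equivariant
quantity indexed by two distinct treatments does not depend on the pair, so it equals its average
over all `m(m − 1)` ordered pairs. Averaging `(u_a(v) − u_b(v'))²` and `(u_a(x) − u_b(x))²` in this
way and using `∑_{a ≠ b} (s_a − t_b)² = (m − 2)(‖s‖² + ‖t‖²) + ‖s + t‖²` for `∑ t = 0` gives the
identity `2m E[D²] = (m − 2)(Z(v) + Z(v')) + Z(v + v')`; the bound then follows from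
`r² + r'² ≤ (r + r')²`.
-/

open Finset

section FiniteSums

variable {α : Type*} [Fintype α] [DecidableEq α]

theorem sum_erase_sub_eq_card_mul {f : α → ℝ} (hf : ∑ b, f b = 0) (a : α) :
    ∑ b ∈ univ.erase a, (f a - f b) = Fintype.card α * f a := by
  rw [sum_erase_eq_sub (mem_univ a), sum_sub_distrib, sum_const, card_univ, hf, nsmul_eq_mul]
  ring

theorem sum_sum_erase_sub_sq {s t : α → ℝ} (ht : ∑ b, t b = 0) :
    ∑ a, ∑ b ∈ univ.erase a, (s a - t b) ^ 2
      = (Fintype.card α - 2) * (∑ a, s a ^ 2 + ∑ a, t a ^ 2) + ∑ a, (s a + t a) ^ 2 := by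
  have hrow : ∀ a, ∑ b ∈ univ.erase a, (s a - t b) ^ 2
      = Fintype.card α * s a ^ 2 + ∑ b, t b ^ 2 - (s a - t a) ^ 2 := by
    intro a
    rw [sum_erase_eq_sub (mem_univ a)]
    simp only [sub_sq, sum_add_distrib, sum_sub_distrib, sum_const, card_univ, nsmul_eq_mul,
      ← mul_sum, ht]
    ring
  have hdiag : ∀ a, (s a - t a) ^ 2 = 2 * s a ^ 2 + 2 * t a ^ 2 - (s a + t a) ^ 2 :=
    fun a => by ring
  simp only [hrow, hdiag, sum_sub_distrib, sum_add_distrib, ← mul_sum, sum_const, card_univ,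
    nsmul_eq_mul]
  ring

end FiniteSums

section CenteredImbalance

variable {ι α : Type*} [Fintype ι] [Fintype α] [DecidableEq α]

noncomputable def centeredImbalance (c : ℝ) (W : ι → α) (a : α) (x : ι → ℝ) : ℝ :=
  c * ∑ i, ((if W i = a then 1 else 0) - 1 / (Fintype.card α : ℝ)) * x i

theorem sum_centeredImbalance (c : ℝ) (W : ι → α) (x : ι → ℝ) :
    ∑ a, centeredImbalance c W a x = 0 := by
  have hrow : ∀ i, ∑ a, ((if W i = a then 1 else 0) - 1 / (Fintype.card α : ℝ)) * x i = 0 := by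
    intro i
    have : Nonempty α := ⟨W i⟩
    rw [← sum_mul, sum_sub_distrib, sum_ite_eq, sum_const, card_univ, nsmul_eq_mul,
      mul_one_div_cancel (Nat.cast_ne_zero.mpr Fintype.card_ne_zero)]
    simp
  simp only [centeredImbalance, ← mul_sum]
  rw [sum_comm, sum_eq_zero fun i _ => hrow i, mul_zero]

theorem centeredImbalance_sub_centeredImbalance (c : ℝ) (W : ι → α) (a b : α) (x : ι → ℝ) :
    centeredImbalance c W a x - centeredImbalance c W b x
      = c * ∑ i, ((if W i = a then 1 else 0) - (if W i = b then 1 else 0)) * x i := by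
  simp only [centeredImbalance, ← mul_sub, ← sum_sub_distrib]
  congr 1
  exact sum_congr rfl fun i _ => by ring

theorem centeredImbalance_perm (c : ℝ) (π : Equiv.Perm α) (W : ι → α) (a : α) (x : ι → ℝ) :
    centeredImbalance c (fun i => π (W i)) (π a) x = centeredImbalance c W a x := by
  simp only [centeredImbalance, Equiv.apply_eq_iff_eq]

theorem centeredImbalance_add (c : ℝ) (W : ι → α) (a : α) (x y : ι → ℝ) :
    centeredImbalance c W a (x + y) = centeredImbalance c W a x + centeredImbalance c W a y := by
  simp only [centeredImbalance, Pi.add_apply, mul_add, sum_add_distrib]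

end CenteredImbalance

section Design

variable {ι α : Type*} [Fintype ι] [DecidableEq ι] [Fintype α] {σ : (ι → α) → ℝ}

def IsTreatmentSymmetric (σ : (ι → α) → ℝ) : Prop :=
  ∀ (π : Equiv.Perm α) (W : ι → α), σ (fun i => π (W i)) = σ W

theorem IsTreatmentSymmetric.sum_mul_comp (hσ : IsTreatmentSymmetric σ) (π : Equiv.Perm α)
    (G : (ι → α) → ℝ) : ∑ W, σ W * G (fun i => π (W i)) = ∑ W, σ W * G W :=
  Fintype.sum_equiv ((Equiv.refl ι).arrowCongr π) _ _ fun W => by rw [← hσ π W]; rfl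

theorem IsTreatmentSymmetric.sum_mul_eq_of_ne (hσ : IsTreatmentSymmetric σ)
    {G : α → α → (ι → α) → ℝ}
    (hG : ∀ (π : Equiv.Perm α) a b W, G (π a) (π b) (fun i => π (W i)) = G a b W)
    {a b c d : α} (hab : a ≠ b) (hcd : c ≠ d) :
    ∑ W, σ W * G a b W = ∑ W, σ W * G c d W := by
  obtain ⟨π, rfl, rfl⟩ := MulAction.is_two_pretransitive_iff.mp
    (Equiv.Perm.isMultiplyPretransitive α 2) hab hcd
  rw [← hσ.sum_mul_comp π (G (π • a) (π • b))]
  simp only [Equiv.Perm.smul_def, hG]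

theorem IsTreatmentSymmetric.sum_mul_sum_sum_erase [DecidableEq α] (hσ : IsTreatmentSymmetric σ)
    {G : α → α → (ι → α) → ℝ}
    (hG : ∀ (π : Equiv.Perm α) a b W, G (π a) (π b) (fun i => π (W i)) = G a b W)
    {c d : α} (hcd : c ≠ d) :
    ∑ W, σ W * ∑ a, ∑ b ∈ univ.erase a, G a b W
      = Fintype.card α * (Fintype.card α - 1) * ∑ W, σ W * G c d W := by
  have : Nonempty α := ⟨c⟩
  calc ∑ W, σ W * ∑ a, ∑ b ∈ univ.erase a, G a b W
      = ∑ a, ∑ b ∈ univ.erase a, ∑ W, σ W * G a b W := by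
        simp only [mul_sum]
        rw [sum_comm]
        exact sum_congr rfl fun a _ => sum_comm
    _ = ∑ a : α, ∑ b ∈ univ.erase a, ∑ W, σ W * G c d W :=
        sum_congr rfl fun a _ => sum_congr rfl fun b hb =>
          hσ.sum_mul_eq_of_ne hG (ne_of_mem_erase hb).symm hcd
    _ = _ := by
        simp only [sum_const, card_erase_of_mem (mem_univ _), card_univ, nsmul_eq_mul,
          Nat.cast_pred Fintype.card_pos]
        ring

variable [DecidableEq α]

theorem IsTreatmentSymmetric.two_mul_sum_mul_sum_centeredImbalance_sq
    (hσ : IsTreatmentSymmetric σ) (c : ℝ) (x : ι → ℝ) {k l : α} (hkl : k ≠ l) :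
    2 * ∑ W, σ W * ∑ a, centeredImbalance c W a x ^ 2
      = (Fintype.card α - 1)
        * ∑ W, σ W * (centeredImbalance c W k x - centeredImbalance c W l x) ^ 2 := by
  have hpoint : ∀ W : ι → α, ∑ a, ∑ b ∈ univ.erase a,
      (centeredImbalance c W a x - centeredImbalance c W b x) ^ 2
        = 2 * Fintype.card α * ∑ a, centeredImbalance c W a x ^ 2 := fun W => by
    rw [sum_sum_erase_sub_sq (sum_centeredImbalance c W x)]
    simp only [← two_mul, mul_pow, ← mul_sum]
    ring
  have hpair := hσ.sum_mul_sum_sum_erase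
    (G := fun a b W => (centeredImbalance c W a x - centeredImbalance c W b x) ^ 2)
    (fun π a b W => by simp only [centeredImbalance_perm]) hkl
  simp only [hpoint, mul_left_comm (σ _), ← mul_sum] at hpair
  have : Nonempty α := ⟨k⟩
  apply mul_left_cancel₀ (Nat.cast_ne_zero.mpr Fintype.card_ne_zero : (Fintype.card α : ℝ) ≠ 0)
  linear_combination hpair

theorem IsTreatmentSymmetric.card_mul_sum_mul_centeredImbalance_sub_sq
    (hσ : IsTreatmentSymmetric σ) (c : ℝ) (v v' : ι → ℝ) {k k' : α} (hkk' : k ≠ k') :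
    Fintype.card α * (Fintype.card α - 1)
        * ∑ W, σ W * (centeredImbalance c W k v - centeredImbalance c W k' v') ^ 2
      = (Fintype.card α - 2) * (∑ W, σ W * ∑ a, centeredImbalance c W a v ^ 2
          + ∑ W, σ W * ∑ a, centeredImbalance c W a v' ^ 2)
        + ∑ W, σ W * ∑ a, centeredImbalance c W a (v + v') ^ 2 := by
  rw [← hσ.sum_mul_sum_sum_erase
    (G := fun a b W => (centeredImbalance c W a v - centeredImbalance c W b v') ^ 2)
    (fun π a b W => by simp only [centeredImbalance_perm]) hkk']
  simp only [sum_sum_erase_sub_sq (sum_centeredImbalance c _ v'), ← centeredImbalance_add,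
    mul_add, sum_add_distrib, mul_left_comm (σ _), ← mul_sum]

end Design

theorem stmt15_general (m p n : ℕ)
    (σ : (Fin n → Fin m) → ℝ)
    (hsym : ∀ (π : Equiv.Perm (Fin m)) (W : Fin n → Fin m), σ (fun i => π (W i)) = σ W)
    (B : (Fin n → Fin m) → Fin m → Fin m → (Fin n → ℝ) → ℝ)
    (hB : ∀ W k l x, B W k l x = (1 / (p : ℝ)) *
        ∑ i, (((if W i = k then (1 : ℝ) else 0) - (if W i = l then 1 else 0)) * x i))
    (t₁ t₂ : Fin m) (ht₁ : (t₁ : ℕ) = 0) (ht₂ : (t₂ : ℕ) = 1)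
    (Z : (Fin n → ℝ) → ℝ)
    (hZ : ∀ x, Z x = ∑ W : Fin n → Fin m, σ W * (B W t₁ t₂ x) ^ 2)
    (v v' : Fin n → ℝ) (k k' : Fin m) (hkk' : k ≠ k')
    (D : (Fin n → Fin m) → ℝ)
    (hD : ∀ W, D W = (1 / (m : ℝ)) * (∑ l ∈ Finset.univ.filter fun l => l ≠ k, B W k l v)
        - (1 / (m : ℝ)) * (∑ l ∈ Finset.univ.filter fun l => l ≠ k', B W k' l v'))
    (r r' M : ℝ) (hr : 0 ≤ r) (hr' : 0 ≤ r') (hM : 0 ≤ M)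
    (hZv : Z v ≤ r ^ 2 * M) (hZv' : Z v' ≤ r' ^ 2 * M)
    (hZvv' : Z (v + v') ≤ (r + r') ^ 2 * M) :
    ∑ W : Fin n → Fin m, σ W * (D W) ^ 2
      ≤ ((r + r') ^ 2 / 2) * (1 - 1 / (m : ℝ)) * M := by
  have hσ : IsTreatmentSymmetric σ := hsym
  have hm : (2 : ℝ) ≤ m := by exact_mod_cast ht₂ ▸ t₂.isLt
  have ht : t₁ ≠ t₂ := Fin.ne_of_val_ne (by omega)
  have hBu : ∀ W a b x, B W a b x
      = centeredImbalance (1 / p) W a x - centeredImbalance (1 / p) W b x := fun W a b x => by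
    rw [hB, centeredImbalance_sub_centeredImbalance]
  have hDu : ∀ W, D W = centeredImbalance (1 / p) W k v - centeredImbalance (1 / p) W k' v' :=
    fun W => by
      simp only [hD, filter_ne', hBu, sum_erase_sub_eq_card_mul (sum_centeredImbalance _ W _),
        Fintype.card_fin]
      field_simp
  have hsqZ := fun x => hσ.two_mul_sum_mul_sum_centeredImbalance_sq (1 / p) x ht
  have hsqD := hσ.card_mul_sum_mul_centeredImbalance_sub_sq (1 / p) v v' hkk'
  simp only [Fintype.card_fin, ← hBu, ← hZ, ← hDu] at hsqZ hsqD
  have hE : 2 * m * ∑ W, σ W * D W ^ 2 = (m - 2) * (Z v + Z v') + Z (v + v') := by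
    apply mul_left_cancel₀ (by linarith : (m : ℝ) - 1 ≠ 0)
    linear_combination 2 * hsqD + (m - 2) * (hsqZ v + hsqZ v') + hsqZ (v + v')
  have hbound : (m - 2) * (Z v + Z v') + Z (v + v') ≤ (m - 1) * ((r + r') ^ 2 * M) := by
    nlinarith [mul_nonneg (mul_nonneg (sub_nonneg.mpr hm) hM) (mul_nonneg hr hr')]
  rw [show (r + r') ^ 2 / 2 * (1 - 1 / (m : ℝ)) * M = (m - 1) * ((r + r') ^ 2 * M) / (2 * m) by
    field_simp, le_div_iff₀ (by positivity)]
  linarith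

/-- The variance of the bias term `D_{kk'}` of a treatment-symmetric design is bounded by
the expected optimal imbalance `M` scaled by the norms `r, r'` of the two regression
functions: if `Z(v) ≤ r²M`, `Z(v') ≤ r'²M` and `Z(v+v') ≤ (r+r')²M`, then
`E[D²] ≤ ((r+r')²/2)(1 − 1/m) M`. -/
theorem stmt15 (m p n : ℕ) (hm : 2 ≤ m) (hp : 1 ≤ p) (hn : n = m * p)
    (σ : (Fin n → Fin m) → ℝ)
    (hσ0 : ∀ W, 0 ≤ σ W)
    (hσ1 : ∑ W : Fin n → Fin m, σ W = 1)
    (hsupp : ∀ W : Fin n → Fin m, σ W ≠ 0 →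
        ∀ k, (Finset.univ.filter fun i => W i = k).card = p)
    (hsym : ∀ (π : Equiv.Perm (Fin m)) (W : Fin n → Fin m), σ (fun i => π (W i)) = σ W)
    (B : (Fin n → Fin m) → Fin m → Fin m → (Fin n → ℝ) → ℝ)
    (hB : ∀ W k l x, B W k l x = (1 / (p : ℝ)) *
        ∑ i, (((if W i = k then (1 : ℝ) else 0) - (if W i = l then 1 else 0)) * x i))
    (t₁ t₂ : Fin m) (ht₁ : (t₁ : ℕ) = 0) (ht₂ : (t₂ : ℕ) = 1)
    (Z : (Fin n → ℝ) → ℝ)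
    (hZ : ∀ x, Z x = ∑ W : Fin n → Fin m, σ W * (B W t₁ t₂ x) ^ 2)
    (v v' : Fin n → ℝ) (k k' : Fin m) (hkk' : k ≠ k')
    (D : (Fin n → Fin m) → ℝ)
    (hD : ∀ W, D W = (1 / (m : ℝ)) * (∑ l ∈ Finset.univ.filter fun l => l ≠ k, B W k l v)
        - (1 / (m : ℝ)) * (∑ l ∈ Finset.univ.filter fun l => l ≠ k', B W k' l v'))
    (r r' M : ℝ) (hr : 0 ≤ r) (hr' : 0 ≤ r') (hM : 0 ≤ M)
    (hZv : Z v ≤ r ^ 2 * M) (hZv' : Z v' ≤ r' ^ 2 * M)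
    (hZvv' : Z (v + v') ≤ (r + r') ^ 2 * M) :
    ∑ W : Fin n → Fin m, σ W * (D W) ^ 2
      ≤ ((r + r') ^ 2 / 2) * (1 - 1 / (m : ℝ)) * M :=
  stmt15_general m p n σ hsym B hB t₁ t₂ ht₁ ht₂ Z hZ v v' k k' hkk' D hD r r' M hr hr' hM hZv hZv'
    hZvv'
end

section
/- Let n ≥ 2 be even, let σ be any probability distribution on U, and set P = Σ_{u ∈ U} σ(u) · u uᵀ ∈ ℝ^{n×n}. Then the supremum over y ∈ ℝⁿ with Σ_{i=1}^n y_i = 0 and y ≠ 0 of [ Σ_{u ∈ U} σ(u) ((2/n) Σ_{i=1}^n u_i y_i)² ] / [ (4/(n(n−1))) Σ_{i=1}^n y_i² ] equals (1 − 1/n) λ_max(P), where λ_max denotes the largest eigenvalue. (The worst-case variance ratio of a design relative to complete randomization is (1 − 1/n) times the top eigenvalue of its P matrix.) -/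
open scoped Classical BigOperators

/-
The ratio in question is `(1 - 1/n)` times the Rayleigh quotient `yᵀPy / yᵀy`, and the
constraint `∑ yᵢ = 0` says `y ⊥ 𝟙`. The matrix `P = ∑ σ(u) u uᵀ` is positive semidefinite, and
`𝟙ᵀP = 0` because every `u ∈ U` is balanced. Hence a top eigenvector `v` of `P` satisfies
`λ_max (𝟙 ⬝ v) = 𝟙ᵀPv = 0`: if `λ_max > 0` it is admissible and attains the bound
`yᵀPy ≤ λ_max yᵀy`, and if `λ_max = 0` the quotient vanishes on every admissible `y`.
-/

open Matrix

namespace Matrix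

variable {ι : Type*} [Fintype ι]

section Spectral

variable [DecidableEq ι]

theorem IsHermitian.posSemidef_iSup_eigenvalues_smul_one_sub {A : Matrix ι ι ℝ}
    (hA : A.IsHermitian) : ((⨆ i, hA.eigenvalues i) • 1 - A).PosSemidef := by
  set μ := hA.eigenvalues
  set c := ⨆ i, μ i
  set V : Matrix ι ι ℝ := (hA.eigenvectorUnitary : Matrix ι ι ℝ)
  have hV : V * star V = 1 := Unitary.mul_star_self_of_mem hA.eigenvectorUnitary.2
  have hdiag : c • 1 - A = V * diagonal (fun i => c - μ i) * Vᴴ := by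
    have : diagonal (fun i => c - μ i) = c • 1 - diagonal μ := by
      rw [← diagonal_sub, ← smul_one_eq_diagonal]
    conv_lhs => rw [hA.spectral_theorem, Unitary.conjStarAlgAut_apply]
    rw [this, mul_sub, sub_mul, mul_smul_one, ← star_eq_conjTranspose, smul_mul_assoc, hV]
    rfl
  rw [hdiag]
  refine (PosSemidef.diagonal fun i => ?_).mul_mul_conjTranspose_same V
  exact sub_nonneg.2 (le_ciSup (Set.finite_range _).bddAbove i)

theorem IsHermitian.dotProduct_mulVec_le_iSup_eigenvalues_mul {A : Matrix ι ι ℝ}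
    (hA : A.IsHermitian) (x : ι → ℝ) :
    x ⬝ᵥ A *ᵥ x ≤ (⨆ i, hA.eigenvalues i) * (x ⬝ᵥ x) := by
  have := hA.posSemidef_iSup_eigenvalues_smul_one_sub.dotProduct_mulVec_nonneg x
  rwa [star_trivial, sub_mulVec, smul_mulVec, one_mulVec, dotProduct_sub, dotProduct_smul,
    smul_eq_mul, sub_nonneg] at this

theorem IsHermitian.exists_mulVec_eq_iSup_eigenvalues_smul [Nonempty ι] {A : Matrix ι ι ℝ}
    (hA : A.IsHermitian) : ∃ v ≠ 0, A *ᵥ v = (⨆ i, hA.eigenvalues i) • v := by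
  obtain ⟨i, hi⟩ := exists_eq_ciSup_of_finite (f := hA.eigenvalues)
  refine ⟨hA.eigenvectorBasis i, fun h => hA.eigenvectorBasis.orthonormal.ne_zero i ?_, ?_⟩
  · exact WithLp.ofLp_injective 2 h
  · rw [← hi, hA.mulVec_eigenvectorBasis]

theorem PosSemidef.isGreatest_rayleigh_of_one_vecMul_eq_zero [Nontrivial ι] {A : Matrix ι ι ℝ}
    (hA : A.PosSemidef) (hcol : 1 ᵥ* A = 0) :
    IsGreatest {r | ∃ y : ι → ℝ, ∑ i, y i = 0 ∧ y ≠ 0 ∧ r = y ⬝ᵥ A *ᵥ y / (y ⬝ᵥ y)}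
      (⨆ i, hA.1.eigenvalues i) := by
  set c := ⨆ i, hA.1.eigenvalues i
  have hpos : ∀ y : ι → ℝ, y ≠ 0 → 0 < y ⬝ᵥ y := fun y hy => by
    simpa using dotProduct_star_self_pos_iff.2 hy
  refine ⟨?_, ?_⟩
  · by_cases hc : c = 0
    · obtain ⟨i, j, hij⟩ := exists_pair_ne ι
      set y : ι → ℝ := Pi.single i 1 - Pi.single j 1
      have hy : y ≠ 0 := fun h => by simpa [y, hij] using congrFun h i
      have hAy : y ⬝ᵥ A *ᵥ y = 0 := le_antisymm
        ((hA.1.dotProduct_mulVec_le_iSup_eigenvalues_mul y).trans_eq (mul_eq_zero_of_left hc _))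
        (by simpa using hA.dotProduct_mulVec_nonneg y)
      exact ⟨y, by simp [y, Finset.sum_sub_distrib], hy, by rw [hAy, zero_div, hc]⟩
    · obtain ⟨v, hv, hAv⟩ := hA.1.exists_mulVec_eq_iSup_eigenvalues_smul
      refine ⟨v, ?_, hv, ?_⟩
      · have : c * (1 ⬝ᵥ v) = 0 := by
          rw [← smul_eq_mul, ← dotProduct_smul, ← hAv, dotProduct_mulVec, hcol, zero_dotProduct]
        simpa [one_dotProduct, hc] using this
      · rw [hAv, dotProduct_smul, smul_eq_mul, mul_div_cancel_right₀ _ (hpos v hv).ne']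
  · rintro _ ⟨y, -, hy, rfl⟩
    rw [div_le_iff₀ (hpos y hy)]
    exact hA.1.dotProduct_mulVec_le_iSup_eigenvalues_mul y

end Spectral

section Gram

variable {α : Type*} (U : Finset α) (σ : α → ℝ) (s : α → ι → ℝ)

theorem dotProduct_sum_smul_vecMulVec_self_mulVec (x : ι → ℝ) :
    x ⬝ᵥ (∑ u ∈ U, σ u • vecMulVec (s u) (s u)) *ᵥ x = ∑ u ∈ U, σ u * (s u ⬝ᵥ x) ^ 2 := by
  simp only [sum_mulVec, dotProduct_sum, smul_mulVec, vecMulVec_mulVec, dotProduct_smul]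
  refine Finset.sum_congr rfl fun u _ => ?_
  simp [dotProduct_comm x (s u), sq]

theorem one_vecMul_sum_smul_vecMulVec_self (hs : ∀ u ∈ U, ∑ i, s u i = 0) :
    1 ᵥ* (∑ u ∈ U, σ u • vecMulVec (s u) (s u)) = 0 := by
  simp only [vecMul_sum, vecMul_smul, vecMul_vecMulVec, one_dotProduct]
  exact Finset.sum_eq_zero fun u hu => by simp [hs u hu]

theorem posSemidef_sum_smul_vecMulVec_self (hσ : ∀ u ∈ U, 0 ≤ σ u) :
    (∑ u ∈ U, σ u • vecMulVec (s u) (s u)).PosSemidef :=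
  posSemidef_sum U fun u hu => (posSemidef_vecMulVec_self_star (s u)).smul (hσ u hu)

end Gram

end Matrix

theorem varianceRatio_eq_mul_rayleigh {α : Type*} {n : ℕ} (hn : 1 < n) (U : Finset α)
    (σ : α → ℝ) (s : α → Fin n → ℝ) (y : Fin n → ℝ) :
    (∑ u ∈ U, σ u * ((2 / (n : ℝ)) * ∑ i, s u i * y i) ^ 2) /
        ((4 / ((n : ℝ) * ((n : ℝ) - 1))) * ∑ i, (y i) ^ 2)
      = (1 - 1 / (n : ℝ)) * (y ⬝ᵥ (∑ u ∈ U, σ u • vecMulVec (s u) (s u)) *ᵥ y / (y ⬝ᵥ y)) := by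
  have hn1 : (1 : ℝ) < n := by exact_mod_cast hn
  have hnum : ∑ u ∈ U, σ u * ((2 / (n : ℝ)) * ∑ i, s u i * y i) ^ 2
      = (2 / (n : ℝ)) ^ 2 * ∑ u ∈ U, σ u * (s u ⬝ᵥ y) ^ 2 := by
    rw [Finset.mul_sum]
    exact Finset.sum_congr rfl fun u _ => by rw [dotProduct]; ring
  have hden : y ⬝ᵥ y = ∑ i, y i ^ 2 := by simp only [dotProduct, sq]
  rw [dotProduct_sum_smul_vecMulVec_self_mulVec, hnum, hden]
  field_simp
  ring

theorem stmt18_general (n : ℕ) (hn : 2 ≤ n)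
    (σ : (Fin n → Bool) → ℝ)
    (hσ0 : ∀ u ∈ balancedAssignments n, 0 ≤ σ u)
    (P : Matrix (Fin n) (Fin n) ℝ)
    (hPdef : ∀ i j, P i j = ∑ u ∈ balancedAssignments n, σ u * (sgn u i * sgn u j))
    (hP : P.IsHermitian) :
    sSup {r : ℝ | ∃ y : Fin n → ℝ, (∑ i, y i = 0) ∧ y ≠ 0 ∧
        r = (∑ u ∈ balancedAssignments n,
              σ u * ((2 / (n : ℝ)) * ∑ i, sgn u i * y i) ^ 2) /
            ((4 / ((n : ℝ) * ((n : ℝ) - 1))) * ∑ i, (y i) ^ 2)}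
      = (1 - 1 / (n : ℝ)) * ⨆ i, hP.eigenvalues i := by
  set U := balancedAssignments n
  have hPeq : P = ∑ u ∈ U, σ u • vecMulVec (sgn u) (sgn u) := by
    ext i j
    simp [hPdef, Matrix.sum_apply, vecMulVec_apply]
  subst hPeq
  have : Nontrivial (Fin n) := Fin.nontrivial_iff_two_le.2 hn
  have hgreatest :=
    (posSemidef_sum_smul_vecMulVec_self U σ sgn hσ0).isGreatest_rayleigh_of_one_vecMul_eq_zero
      (one_vecMul_sum_smul_vecMulVec_self U σ sgn fun u hu => (Finset.mem_filter.1 hu).2)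
  have hscale : 0 ≤ 1 - 1 / (n : ℝ) := by
    rw [sub_nonneg, div_le_one (by positivity)]
    exact_mod_cast (by omega : 1 ≤ n)
  simp_rw [varianceRatio_eq_mul_rayleigh hn U σ sgn]
  refine Eq.trans (congrArg sSup ?_)
    ((monotone_mul_left_of_nonneg hscale).map_isGreatest hgreatest).csSup_eq
  ext r
  constructor
  · rintro ⟨y, hsum, hy, rfl⟩
    exact ⟨_, ⟨y, hsum, hy, rfl⟩, rfl⟩
  · rintro ⟨_, ⟨y, hsum, hy, rfl⟩, rfl⟩
    exact ⟨y, hsum, hy, rfl⟩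

/-- The worst-case variance ratio of a design relative to complete randomization is
`(1 − 1/n)` times the top eigenvalue of its matrix `P = ∑_{u ∈ U} σ(u) u uᵀ`. -/
theorem stmt18 (n : ℕ) (hn : 2 ≤ n) (hne : Even n)
    (σ : (Fin n → Bool) → ℝ)
    (hσ0 : ∀ u ∈ balancedAssignments n, 0 ≤ σ u)
    (hσ1 : ∑ u ∈ balancedAssignments n, σ u = 1)
    (P : Matrix (Fin n) (Fin n) ℝ)
    (hPdef : ∀ i j, P i j = ∑ u ∈ balancedAssignments n, σ u * (sgn u i * sgn u j))
    (hP : P.IsHermitian) :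
    sSup {r : ℝ | ∃ y : Fin n → ℝ, (∑ i, y i = 0) ∧ y ≠ 0 ∧
        r = (∑ u ∈ balancedAssignments n,
              σ u * ((2 / (n : ℝ)) * ∑ i, sgn u i * y i) ^ 2) /
            ((4 / ((n : ℝ) * ((n : ℝ) - 1))) * ∑ i, (y i) ^ 2)}
      = (1 - 1 / (n : ℝ)) * ⨆ i, hP.eigenvalues i :=
  stmt18_general n hn σ hσ0 P hPdef hP
end
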